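/- arXiv:0709.0424 — 3 statements merged into one kernel-verified Lean document; each statement's English description precedes it below -/
import Mathlib

section
/- Let 𝔈 be a Hilbert space decomposed as an orthogonal direct sum 𝔈 = 𝔈₁ ⊕ 𝔈₂ of closed subspaces, and let T be a bounded self-adjoint operator on 𝔈 with block decomposition A = P₁ T|_{𝔈₁} : 𝔈₁ → 𝔈₁, B = P₂ T|_{𝔈₁} : 𝔈₁ → 𝔈₂, C = P₂ T|_{𝔈₂} : 𝔈₂ → 𝔈₂. Suppose C is boundedly invertible. Then ind T = ind(A − B*C⁻¹B) + ind C. -/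
open scoped InnerProductSpace

/-- The negative index of inertia of a bounded Hermitian operator `T`: the supremum
(in `ℕ∞`, so the value `⊤ = +∞` is allowed) of the dimensions of subspaces `M` such
that `⟨Ty, y⟩ ≤ -ε‖y‖²` on `M` for some `ε > 0`. -/
noncomputable def negInd {𝕜 E : Type*} [RCLike 𝕜] [NormedAddCommGroup E]
    [InnerProductSpace 𝕜 E] (T : E →L[𝕜] E) : ℕ∞ :=
  sSup {N : ℕ∞ | ∃ M : Submodule 𝕜 E, N = (Module.rank 𝕜 M).toENat ∧
    ∃ ε : ℝ, 0 < ε ∧ ∀ y ∈ M, RCLike.re ⟪T y, y⟫_𝕜 ≤ -ε * ‖y‖ ^ 2}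

section Aux

open Module RCLike Finset

/-- Finite-dimensional spectral decomposition into a negative part and a nonnegative part. -/
lemma fd_decomp {𝕜 F : Type*} [RCLike 𝕜] [NormedAddCommGroup F] [InnerProductSpace 𝕜 F]
    [FiniteDimensional 𝕜 F] (S : F →ₗ[𝕜] F) (hS : S.IsSymmetric) :
    ∃ (Gn Gp : Submodule 𝕜 F) (ε : ℝ), 0 < ε ∧
      (∀ y ∈ Gn, re ⟪S y, y⟫_𝕜 ≤ -ε * ‖y‖ ^ 2) ∧
      (∀ y ∈ Gp, 0 ≤ re ⟪S y, y⟫_𝕜) ∧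
      finrank 𝕜 Gn + finrank 𝕜 Gp = finrank 𝕜 F := by
  classical
  set n := finrank 𝕜 F with hn
  let b := hS.eigenvectorBasis rfl
  let μ : Fin n → ℝ := hS.eigenvalues rfl
  have fact_norm : ∀ y : F, ‖y‖ ^ 2 = ∑ i, ‖b.repr y i‖ ^ 2 := by
    intro y
    rw [← b.repr.norm_map y, EuclideanSpace.norm_eq, Real.sq_sqrt]
    positivity
  have fact_repr : ∀ y : F, re ⟪S y, y⟫_𝕜 = ∑ i, μ i * ‖b.repr y i‖ ^ 2 := by
    intro y
    rw [← b.repr.inner_map_map (S y) y, PiLp.inner_apply, map_sum]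
    congr 1; ext i
    rw [RCLike.inner_apply, hS.eigenvectorBasis_apply_self_apply rfl y i,
      map_mul (starRingEnd 𝕜) _ _,
      RCLike.conj_ofReal, mul_left_comm, RCLike.mul_conj, ← RCLike.ofReal_pow,
      ← RCLike.ofReal_mul, RCLike.ofReal_re]
  have fact_coord : ∀ (P : Fin n → Prop) (y : F),
      y ∈ Submodule.span 𝕜 (Set.range fun i : {i : Fin n // P i} => b i) →
      ∀ i : Fin n, ¬ P i → b.repr y i = 0 := by
    intro P y hy i hi
    rw [b.repr_apply_apply]
    have : Submodule.span 𝕜 (Set.range fun j : {j : Fin n // P j} => b j) ≤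
        LinearMap.ker (innerSL 𝕜 (b i) : F →ₗ[𝕜] 𝕜) := by
      rw [Submodule.span_le]
      rintro _ ⟨j, rfl⟩
      simp only [SetLike.mem_coe, LinearMap.mem_ker, ContinuousLinearMap.coe_coe, innerSL_apply_apply]
      exact b.orthonormal.2 (fun h => hi (h ▸ j.2))
    exact this hy
  refine ⟨Submodule.span 𝕜 (Set.range fun i : {i : Fin n // μ i < 0} => b i),
    Submodule.span 𝕜 (Set.range fun i : {i : Fin n // ¬ μ i < 0} => b i), ?_⟩
  set negs : Finset (Fin n) := Finset.univ.filter (fun i => μ i < 0) with hnegs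
  set εs : Finset ℝ := insert (1:ℝ) (negs.image fun i => -μ i) with hεs
  have hεsne : εs.Nonempty := ⟨1, by simp [hεs]⟩
  refine ⟨εs.min' hεsne, ?_, ?_, ?_, ?_⟩
  · rw [Finset.lt_min'_iff]
    intro a ha
    rw [hεs, Finset.mem_insert] at ha
    rcases ha with rfl | ha
    · norm_num
    · obtain ⟨i, hi, rfl⟩ := Finset.mem_image.1 ha
      rw [hnegs, Finset.mem_filter] at hi
      linarith [hi.2]
  · intro y hy
    rw [fact_repr, fact_norm, Finset.mul_sum]
    apply Finset.sum_le_sum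
    intro i _
    by_cases hμ : μ i < 0
    · have hε : εs.min' hεsne ≤ -μ i := by
        apply Finset.min'_le
        rw [hεs]
        exact Finset.mem_insert_of_mem (Finset.mem_image_of_mem _ (by simp [hnegs, hμ]))
      nlinarith [sq_nonneg ‖b.repr y i‖]
    · rw [fact_coord _ y hy i hμ]
      simp
  · intro y hy
    rw [fact_repr]
    apply Finset.sum_nonneg
    intro i _
    by_cases hμ : μ i < 0
    · rw [fact_coord _ y hy i (by simpa using hμ)]
      simp
    · have := sq_nonneg ‖b.repr y i‖
      nlinarith [not_lt.1 hμ]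
  · have li1 : LinearIndependent 𝕜 (fun i : {i : Fin n // μ i < 0} => b ↑i) :=
      b.orthonormal.linearIndependent.comp _ Subtype.val_injective
    have li2 : LinearIndependent 𝕜 (fun i : {i : Fin n // ¬ μ i < 0} => b ↑i) :=
      b.orthonormal.linearIndependent.comp _ Subtype.val_injective
    rw [finrank_span_eq_card li1, finrank_span_eq_card li2,
      Fintype.card_subtype, Fintype.card_subtype,
      Finset.card_filter_add_card_filter_not]
    simp

/-- Compression of a symmetric operator to a finite-dimensional subspace, decomposed. -/
lemma compress_decomp {𝕜 H : Type*} [RCLike 𝕜] [NormedAddCommGroup H] [InnerProductSpace 𝕜 H]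
    (S : H →L[𝕜] H) (hS : ∀ x y : H, ⟪S x, y⟫_𝕜 = ⟪x, S y⟫_𝕜)
    (F : Submodule 𝕜 H) [FiniteDimensional 𝕜 F] :
    ∃ (Gn Gp : Submodule 𝕜 F) (ε : ℝ), 0 < ε ∧
      (∀ y : F, y ∈ Gn → re ⟪S ↑y, (↑y : H)⟫_𝕜 ≤ -ε * ‖(y : H)‖ ^ 2) ∧
      (∀ y : F, y ∈ Gp → 0 ≤ re ⟪S ↑y, (↑y : H)⟫_𝕜) ∧
      finrank 𝕜 Gn + finrank 𝕜 Gp = finrank 𝕜 F := by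
  haveI : CompleteSpace F := FiniteDimensional.complete 𝕜 F
  set Sc : F →L[𝕜] F := (Submodule.orthogonalProjectionOnto F).comp (S.comp F.subtypeL) with hSc
  have hform : ∀ v w : F, ⟪Sc v, w⟫_𝕜 = ⟪S ↑v, (↑w : H)⟫_𝕜 := by
    intro v w
    rw [hSc]
    simp only [ContinuousLinearMap.comp_apply, Submodule.subtypeL_apply]
    exact Submodule.inner_orthogonalProjectionOnto_eq_of_mem_right (K := F) w (S ↑v)
  have hsymm : (Sc : F →ₗ[𝕜] F).IsSymmetric := by
    intro v w
    calc ⟪Sc v, w⟫_𝕜 = ⟪S ↑v, (↑w : H)⟫_𝕜 := hform v w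
    _ = ⟪(↑v : H), S ↑w⟫_𝕜 := hS _ _
    _ = (starRingEnd 𝕜) ⟪S ↑w, (↑v : H)⟫_𝕜 := (inner_conj_symm _ _).symm
    _ = (starRingEnd 𝕜) ⟪Sc w, v⟫_𝕜 := by rw [hform]
    _ = ⟪v, Sc w⟫_𝕜 := inner_conj_symm _ _
  obtain ⟨Gn, Gp, ε, hε, hGn, hGp, hfr⟩ := fd_decomp (Sc : F →ₗ[𝕜] F) hsymm
  refine ⟨Gn, Gp, ε, hε, ?_, ?_, hfr⟩
  · intro y hy
    have := hGn y hy
    rw [ContinuousLinearMap.coe_coe, hform y y] at this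
    simpa using this
  · intro y hy
    have := hGp y hy
    rwa [ContinuousLinearMap.coe_coe, hform y y] at this

lemma enat_add_le {A B : Set ℕ∞} (hA : A.Nonempty) (hB : B.Nonempty) {c : ℕ∞}
    (h : ∀ a ∈ A, ∀ b ∈ B, a + b ≤ c) : sSup A + sSup B ≤ c := by
  rw [ENat.sSup_add hA]
  apply iSup₂_le
  intro a ha
  rw [ENat.add_sSup hB]
  apply iSup₂_le
  intro b hb
  exact h a ha b hb

end Aux

set_option maxHeartbeats 4000000 in
theorem statement9 {𝕜 E : Type*} [RCLike 𝕜] [NormedAddCommGroup E]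
    [InnerProductSpace 𝕜 E] [CompleteSpace E]
    (T : E →L[𝕜] E) (hT : IsSelfAdjoint T)
    -- orthogonal direct sum decomposition `E = E₁ ⊕ E₂`
    (E₁ E₂ : Submodule 𝕜 E)
    (hE₁ : IsClosed (E₁ : Set E)) (hE₂ : IsClosed (E₂ : Set E))
    (hperp : E₂ = E₁ᗮ) (hspan : E₁ ⊔ E₂ = ⊤)
    -- the block decomposition of `T`: `A = P₁T|_{E₁}`, `B = P₂T|_{E₁}`, `C = P₂T|_{E₂}`
    (A : E₁ →L[𝕜] E₁) (B : E₁ →L[𝕜] E₂) (C : E₂ →L[𝕜] E₂)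
    (hA : ∀ (y w : E₁), ⟪A y, w⟫_𝕜 = ⟪T y, (w : E)⟫_𝕜)
    (hB : ∀ (y : E₁) (z : E₂), ⟪B y, z⟫_𝕜 = ⟪T y, (z : E)⟫_𝕜)
    (hC : ∀ (z w : E₂), ⟪C z, w⟫_𝕜 = ⟪T z, (w : E)⟫_𝕜)
    -- `Bstar = B*` is the adjoint of `B`
    (Bstar : E₂ →L[𝕜] E₁)
    (hBstar : ∀ (z : E₂) (y : E₁), ⟪Bstar z, y⟫_𝕜 = ⟪z, B y⟫_𝕜)
    -- `C` is boundedly invertible with inverse `Cinv`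
    (Cinv : E₂ →L[𝕜] E₂)
    (hCinv₁ : ∀ z : E₂, Cinv (C z) = z) (hCinv₂ : ∀ z : E₂, C (Cinv z) = z) :
    -- `ind T = ind (A − B*C⁻¹B) + ind C`
    negInd T = negInd (A - Bstar.comp (Cinv.comp B)) + negInd C := by
  classical
  open Module RCLike in
  subst hperp
  haveI hcE₁ : CompleteSpace E₁ := hE₁.completeSpace_coe
  set S : E₁ →L[𝕜] E₁ := A - Bstar.comp (Cinv.comp B) with hSdef
  -- basic symmetry facts
  have hTsymm0 : (T : E →ₗ[𝕜] E).IsSymmetric :=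
    ContinuousLinearMap.isSelfAdjoint_iff_isSymmetric.mp hT
  have hTsymm : ∀ x y : E, ⟪T x, y⟫_𝕜 = ⟪x, T y⟫_𝕜 := fun x y => hTsymm0 x y
  have hCsymm : ∀ z w : E₁ᗮ, ⟪C z, w⟫_𝕜 = ⟪z, C w⟫_𝕜 := by
    intro z w
    calc ⟪C z, w⟫_𝕜 = ⟪T ↑z, (↑w : E)⟫_𝕜 := hC z w
    _ = ⟪(↑z : E), T ↑w⟫_𝕜 := hTsymm _ _
    _ = (starRingEnd 𝕜) ⟪T ↑w, (↑z : E)⟫_𝕜 := (inner_conj_symm _ _).symm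
    _ = (starRingEnd 𝕜) ⟪C w, z⟫_𝕜 := by rw [hC]
    _ = ⟪z, C w⟫_𝕜 := inner_conj_symm _ _
  have hCinvsymm : ∀ z w : E₁ᗮ, ⟪Cinv z, w⟫_𝕜 = ⟪z, Cinv w⟫_𝕜 := by
    intro z w
    conv_lhs => rw [show w = C (Cinv w) from (hCinv₂ w).symm]
    rw [← hCsymm, hCinv₂]
  have hAsymm : ∀ y w : E₁, ⟪A y, w⟫_𝕜 = ⟪y, A w⟫_𝕜 := by
    intro y w
    calc ⟪A y, w⟫_𝕜 = ⟪T ↑y, (↑w : E)⟫_𝕜 := hA y w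
    _ = ⟪(↑y : E), T ↑w⟫_𝕜 := hTsymm _ _
    _ = (starRingEnd 𝕜) ⟪T ↑w, (↑y : E)⟫_𝕜 := (inner_conj_symm _ _).symm
    _ = (starRingEnd 𝕜) ⟪A w, y⟫_𝕜 := by rw [hA]
    _ = ⟪y, A w⟫_𝕜 := inner_conj_symm _ _
  have hSsymm : ∀ y w : E₁, ⟪S y, w⟫_𝕜 = ⟪y, S w⟫_𝕜 := by
    intro y w
    have hD : ∀ a b : E₁, ⟪Bstar (Cinv (B a)), b⟫_𝕜 = ⟪a, Bstar (Cinv (B b))⟫_𝕜 := by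
      intro a b
      calc ⟪Bstar (Cinv (B a)), b⟫_𝕜 = ⟪Cinv (B a), B b⟫_𝕜 := hBstar _ _
      _ = ⟪B a, Cinv (B b)⟫_𝕜 := hCinvsymm _ _
      _ = (starRingEnd 𝕜) ⟪Cinv (B b), B a⟫_𝕜 := (inner_conj_symm _ _).symm
      _ = (starRingEnd 𝕜) ⟪Bstar (Cinv (B b)), a⟫_𝕜 := by rw [hBstar]
      _ = ⟪a, Bstar (Cinv (B b))⟫_𝕜 := inner_conj_symm _ _
    have hs : ∀ a : E₁, S a = A a - Bstar (Cinv (B a)) := fun a => rfl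
    rw [hs, hs, inner_sub_left, inner_sub_right, hAsymm, hD]
  -- the key algebraic identity
  have keyId : ∀ (y : E₁) (z : E₁ᗮ),
      re ⟪T ((y : E) + (z : E)), ((y : E) + (z : E))⟫_𝕜
        = re ⟪S y, y⟫_𝕜 + re ⟪C (z + Cinv (B y)), z + Cinv (B y)⟫_𝕜 := by
    intro y z
    set u : E₁ᗮ := Cinv (B y) with hu
    have hCu : C u = B y := hCinv₂ _
    have h1 : ⟪T ((y : E) + (z : E)), ((y : E) + (z : E))⟫_𝕜
        = ⟪A y, y⟫_𝕜 + ⟪B y, z⟫_𝕜 + (starRingEnd 𝕜) ⟪B y, z⟫_𝕜 + ⟪C z, z⟫_𝕜 := by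
      rw [map_add, inner_add_left, inner_add_right, inner_add_right]
      have e3 : ⟪T (z : E), (y : E)⟫_𝕜 = (starRingEnd 𝕜) ⟪B y, z⟫_𝕜 := by
        rw [hTsymm, ← inner_conj_symm, ← hB]
      rw [← hA, ← hB, ← hC, e3]
      ring
    have h2 : ⟪S y, y⟫_𝕜 = ⟪A y, y⟫_𝕜 - ⟪u, B y⟫_𝕜 := by
      have hs : S y = A y - Bstar u := rfl
      rw [hs, inner_sub_left, hBstar]
    have h3 : ⟪C (z + u), z + u⟫_𝕜
        = ⟪C z, z⟫_𝕜 + (starRingEnd 𝕜) ⟪B y, z⟫_𝕜 + ⟪B y, z⟫_𝕜 + (starRingEnd 𝕜) ⟪u, B y⟫_𝕜 := by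
      rw [map_add, inner_add_left, inner_add_right, inner_add_right, hCu]
      have e5 : ⟪C z, u⟫_𝕜 = (starRingEnd 𝕜) ⟪B y, z⟫_𝕜 := by
        rw [hCsymm, ← inner_conj_symm, hCu]
      have e6 : ⟪B y, u⟫_𝕜 = (starRingEnd 𝕜) ⟪u, B y⟫_𝕜 := (inner_conj_symm _ _).symm
      rw [e5, e6]
      ring
    rw [h1, h2, h3]
    simp only [map_add, map_sub, RCLike.conj_re]
    ring
  -- orthogonality facts
  have hor : ∀ (y : E₁) (z : E₁ᗮ), ⟪(y : E), (z : E)⟫_𝕜 = 0 := by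
    intro y z
    exact (Submodule.mem_orthogonal _ _).1 z.2 ↑y y.2
  have hnormsum : ∀ (y : E₁) (z : E₁ᗮ), ‖(y : E) + (z : E)‖ ^ 2 = ‖y‖ ^ 2 + ‖z‖ ^ 2 := by
    intro y z
    have h := norm_add_sq_eq_norm_sq_add_norm_sq_of_inner_eq_zero (y : E) (z : E) (hor y z)
    rw [pow_two, pow_two, pow_two, Submodule.coe_norm, Submodule.coe_norm]
    exact h
  -- projections
  set P₁ : E →L[𝕜] E₁ := Submodule.orthogonalProjectionOnto E₁ with hP₁
  set P₂ : E →L[𝕜] (E₁ᗮ : Submodule 𝕜 E) := Submodule.orthogonalProjectionOnto E₁ᗮ with hP₂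
  have hdecomp : ∀ x : E, ((P₁ x : E) + (P₂ x : E)) = x :=
    Submodule.starProjection_add_starProjection_orthogonal (K := E₁)
  set ψ₂ : E →L[𝕜] (E₁ᗮ : Submodule 𝕜 E) := P₂ + Cinv.comp (B.comp P₁) with hψ₂
  have hψ : ∀ x : E, ψ₂ x = P₂ x + Cinv (B (P₁ x)) := fun x => rfl
  have formId : ∀ x : E,
      re ⟪T x, x⟫_𝕜 = re ⟪S (P₁ x), P₁ x⟫_𝕜 + re ⟪C (ψ₂ x), ψ₂ x⟫_𝕜 := by
    intro x
    conv_lhs => rw [← hdecomp x]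
    rw [keyId (P₁ x) (P₂ x), ← hψ]
  -- the core counting lemma
  have core : ∀ (M : Submodule 𝕜 E), FiniteDimensional 𝕜 M →
      (∃ ε : ℝ, 0 < ε ∧ ∀ x ∈ M, re ⟪T x, x⟫_𝕜 ≤ -ε * ‖x‖ ^ 2) →
      (finrank 𝕜 M : ℕ∞) ≤ negInd S + negInd C := by
    intro M hMfin ⟨ε, hε, hM⟩
    set F₁ : Submodule 𝕜 E₁ := M.map (P₁ : E →ₗ[𝕜] E₁) with hF₁
    set F₂ : Submodule 𝕜 (E₁ᗮ : Submodule 𝕜 E) := M.map (ψ₂ : E →ₗ[𝕜] (E₁ᗮ : Submodule 𝕜 E))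
      with hF₂
    haveI : FiniteDimensional 𝕜 F₁ := Module.Finite.map M _
    haveI : FiniteDimensional 𝕜 F₂ := Module.Finite.map M _
    obtain ⟨Gn₁, Gp₁, ε₁, hε₁, hGn₁, hGp₁, hfr₁⟩ := compress_decomp S hSsymm F₁
    obtain ⟨Gn₂, Gp₂, ε₂, hε₂, hGn₂, hGp₂, hfr₂⟩ := compress_decomp C hCsymm F₂
    -- the negative parts bound negInd S and negInd C
    have hb₁ : ((finrank 𝕜 Gn₁ : ℕ) : ℕ∞) ≤ negInd S := by
      apply le_sSup
      refine ⟨Gn₁.map F₁.subtype, ?_, ε₁, hε₁, ?_⟩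
      · haveI : FiniteDimensional 𝕜 (Gn₁.map F₁.subtype) := Module.Finite.map Gn₁ _
        rw [← Module.finrank_eq_rank, Cardinal.toENat_nat, Submodule.finrank_map_subtype_eq]
      · rintro y ⟨v, hv, rfl⟩
        exact hGn₁ v hv
    have hb₂ : ((finrank 𝕜 Gn₂ : ℕ) : ℕ∞) ≤ negInd C := by
      apply le_sSup
      refine ⟨Gn₂.map F₂.subtype, ?_, ε₂, hε₂, ?_⟩
      · haveI : FiniteDimensional 𝕜 (Gn₂.map F₂.subtype) := Module.Finite.map Gn₂ _
        rw [← Module.finrank_eq_rank, Cardinal.toENat_nat, Submodule.finrank_map_subtype_eq]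
      · rintro y ⟨v, hv, rfl⟩
        exact hGn₂ v hv
    -- the injection into the product of quotients
    have hmem₁ : ∀ x : M, P₁ (x : E) ∈ F₁ := fun x => Submodule.mem_map_of_mem x.2
    have hmem₂ : ∀ x : M, ψ₂ (x : E) ∈ F₂ := fun x => Submodule.mem_map_of_mem x.2
    set f₁ : M →ₗ[𝕜] F₁ :=
      LinearMap.codRestrict F₁ ((P₁ : E →ₗ[𝕜] E₁).comp M.subtype) (fun c => hmem₁ c) with hf₁
    set f₂ : M →ₗ[𝕜] F₂ :=
      LinearMap.codRestrict F₂ ((ψ₂ : E →ₗ[𝕜] (E₁ᗮ : Submodule 𝕜 E)).comp M.subtype)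
        (fun c => hmem₂ c) with hf₂
    set L : M →ₗ[𝕜] (F₁ ⧸ Gp₁) × (F₂ ⧸ Gp₂) :=
      (Gp₁.mkQ.comp f₁).prod (Gp₂.mkQ.comp f₂) with hL
    have hLinj : Function.Injective L := by
      rw [← LinearMap.ker_eq_bot, LinearMap.ker_eq_bot']
      intro m hm
      have hm' : f₁ m ∈ Gp₁ ∧ f₂ m ∈ Gp₂ := by
        have h1 := congrArg Prod.fst hm
        have h2 := congrArg Prod.snd hm
        simp only [hL, LinearMap.prod_apply, Pi.prod, LinearMap.comp_apply] at h1 h2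
        exact ⟨(Submodule.Quotient.mk_eq_zero _).1 h1, (Submodule.Quotient.mk_eq_zero _).1 h2⟩
      have hpos : 0 ≤ re ⟪T (m : E), (m : E)⟫_𝕜 := by
        rw [formId]
        have g1 := hGp₁ (f₁ m) hm'.1
        have g2 := hGp₂ (f₂ m) hm'.2
        have e1 : ((f₁ m : E₁)) = P₁ (m : E) := rfl
        have e2 : ((f₂ m : (E₁ᗮ : Submodule 𝕜 E))) = ψ₂ (m : E) := rfl
        rw [e1] at g1
        rw [e2] at g2
        linarith
      have hneg := hM (m : E) m.2
      have hnz : ‖(m : E)‖ ^ 2 ≤ 0 := by nlinarith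
      have h0 : ‖(m : E)‖ ^ 2 = 0 := le_antisymm hnz (sq_nonneg _)
      exact Subtype.ext (norm_eq_zero.1 (sq_eq_zero_iff.mp h0))
    haveI : FiniteDimensional 𝕜 (F₁ ⧸ Gp₁) := inferInstance
    haveI : FiniteDimensional 𝕜 (F₂ ⧸ Gp₂) := inferInstance
    have hcount : finrank 𝕜 M ≤ finrank 𝕜 Gn₁ + finrank 𝕜 Gn₂ := by
      have h := LinearMap.finrank_le_finrank_of_injective hLinj
      rw [Module.finrank_prod] at h
      have q₁ := Submodule.finrank_quotient_add_finrank Gp₁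
      have q₂ := Submodule.finrank_quotient_add_finrank Gp₂
      omega
    calc ((finrank 𝕜 M : ℕ) : ℕ∞) ≤ ((finrank 𝕜 Gn₁ + finrank 𝕜 Gn₂ : ℕ) : ℕ∞) := by
          exact_mod_cast Nat.cast_le.mpr hcount
    _ = ((finrank 𝕜 Gn₁ : ℕ) : ℕ∞) + ((finrank 𝕜 Gn₂ : ℕ) : ℕ∞) := by push_cast; rfl
    _ ≤ negInd S + negInd C := add_le_add hb₁ hb₂
  -- now the two inequalities
  apply le_antisymm
  · -- `negInd T ≤ negInd S + negInd C`
    apply sSup_le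
    rintro N ⟨M, rfl, ε, hε, hM⟩
    rcases eq_or_ne (negInd S + negInd C) ⊤ with htop | htop
    · rw [htop]; exact le_top
    · obtain ⟨k, hk⟩ : ∃ k : ℕ, negInd S + negInd C = (k : ℕ∞) := by
        obtain ⟨k, hk⟩ := WithTop.ne_top_iff_exists.1 htop
        exact ⟨k, hk.symm⟩
      rw [hk]
      rw [Cardinal.toENat_le_nat]
      apply rank_le
      intro s hs
      have hli : LinearIndependent 𝕜 (fun i : s => ((i : M) : E)) :=
        hs.map' M.subtype M.ker_subtype
      set 𝔪 : Submodule 𝕜 E := Submodule.span 𝕜 (Set.range fun i : s => ((i : M) : E)) with h𝔪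
      have h𝔪M : 𝔪 ≤ M := by
        rw [h𝔪, Submodule.span_le]
        rintro _ ⟨i, rfl⟩
        exact (i : M).2
      haveI hfin : FiniteDimensional 𝕜 𝔪 :=
        FiniteDimensional.span_of_finite 𝕜 (Set.finite_range _)
      have hrank : finrank 𝕜 𝔪 = s.card := by
        rw [h𝔪, finrank_span_eq_card hli, Fintype.card_coe]
      have hcore := core 𝔪 hfin ⟨ε, hε, fun x hx => hM x (h𝔪M hx)⟩
      rw [hk, hrank] at hcore
      exact_mod_cast hcore
  · -- `negInd S + negInd C ≤ negInd T`
    have hne_S : {N : ℕ∞ | ∃ M : Submodule 𝕜 E₁, N = (Module.rank 𝕜 M).toENat ∧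
        ∃ ε : ℝ, 0 < ε ∧ ∀ y ∈ M, re ⟪S y, y⟫_𝕜 ≤ -ε * ‖y‖ ^ 2}.Nonempty := by
      refine ⟨0, ⊥, by simp [rank_bot], 1, one_pos, ?_⟩
      intro y hy
      rw [Submodule.mem_bot] at hy
      simp [hy]
    have hne_C : {N : ℕ∞ | ∃ M : Submodule 𝕜 (E₁ᗮ : Submodule 𝕜 E),
        N = (Module.rank 𝕜 M).toENat ∧
        ∃ ε : ℝ, 0 < ε ∧ ∀ y ∈ M, re ⟪C y, y⟫_𝕜 ≤ -ε * ‖y‖ ^ 2}.Nonempty := by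
      refine ⟨0, ⊥, by simp [rank_bot], 1, one_pos, ?_⟩
      intro y hy
      rw [Submodule.mem_bot] at hy
      simp [hy]
    refine enat_add_le hne_S hne_C ?_
    rintro a ⟨M₁, rfl, ε₁, hε₁, hM₁⟩ b ⟨M₂, rfl, ε₂, hε₂, hM₂⟩
    set c : ℝ := ‖Cinv.comp B‖ with hc
    have hc0 : 0 ≤ c := norm_nonneg (Cinv.comp B)
    set f : E₁ →ₗ[𝕜] E := E₁.subtype - (E₁ᗮ.subtype.comp ((Cinv.comp B : E₁ →L[𝕜]
      (E₁ᗮ : Submodule 𝕜 E)) : E₁ →ₗ[𝕜] (E₁ᗮ : Submodule 𝕜 E))) with hf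
    have hfapp : ∀ y : E₁, f y = (y : E) - (Cinv (B y) : E) := fun y => rfl
    have hfinj : Function.Injective f := by
      rw [← LinearMap.ker_eq_bot, LinearMap.ker_eq_bot']
      intro y hy
      rw [hfapp, sub_eq_zero] at hy
      have hyperp : (y : E) ∈ E₁ᗮ := hy ▸ (Cinv (B y)).2
      have : ⟪(y : E), (y : E)⟫_𝕜 = 0 := (Submodule.mem_orthogonal _ _).1 hyperp ↑y y.2
      have hy0 : (y : E) = 0 := inner_self_eq_zero.1 this
      exact Subtype.ext hy0
    set M₁' : Submodule 𝕜 E := M₁.map f with hM₁'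
    set M₂' : Submodule 𝕜 E := M₂.map E₁ᗮ.subtype with hM₂'
    have hinf : M₁' ⊓ M₂' = ⊥ := by
      rw [eq_bot_iff]
      rintro x ⟨hx1, hx2⟩
      obtain ⟨y, hy, rfl⟩ := hx1
      obtain ⟨z, -, hz⟩ := hx2
      rw [Submodule.mem_bot]
      have hfz : f y ∈ E₁ᗮ := by rw [← hz]; exact z.2
      have hyperp : (y : E) ∈ E₁ᗮ := by
        have : (y : E) = f y + (Cinv (B y) : E) := by rw [hfapp]; abel
        rw [this]
        exact add_mem hfz (Cinv (B y)).2
      have : ⟪(y : E), (y : E)⟫_𝕜 = 0 := (Submodule.mem_orthogonal _ _).1 hyperp ↑y y.2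
      have hy0 : (y : E) = 0 := inner_self_eq_zero.1 this
      have : y = 0 := Subtype.ext hy0
      rw [this, map_zero]
    have hranks : Module.rank 𝕜 (M₁' ⊔ M₂' : Submodule 𝕜 E)
        = Module.rank 𝕜 M₁ + Module.rank 𝕜 M₂ := by
      have h := Submodule.rank_sup_add_rank_inf_eq M₁' M₂'
      rw [hinf, rank_bot, add_zero] at h
      rw [h, ← (Submodule.equivMapOfInjective f hfinj M₁).rank_eq,
        ← (Submodule.equivMapOfInjective E₁ᗮ.subtype (Submodule.injective_subtype _) M₂).rank_eq]
    apply le_sSup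
    refine ⟨M₁' ⊔ M₂', ?_, min ε₁ ε₂ / (2 + 2 * c ^ 2), by positivity, ?_⟩
    · rw [hranks, map_add]
    · intro x hx
      rw [Submodule.mem_sup] at hx
      obtain ⟨p, hp, q, hq, rfl⟩ := hx
      obtain ⟨y, hy, rfl⟩ := hp
      obtain ⟨z, hz, rfl⟩ := hq
      set w : (E₁ᗮ : Submodule 𝕜 E) := z - Cinv (B y) with hw
      clear_value w
      have hx_eq : f y + (z : E) = (y : E) + (w : E) := by
        rw [hfapp, hw, Submodule.coe_sub]; abel
      have hwz : w + Cinv (B y) = z := by rw [hw]; abel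
      simp only [Submodule.subtype_apply]
      rw [hx_eq, keyId y w, hwz]
      have h1 := hM₁ y hy
      have h2 := hM₂ z hz
      have hnx := hnormsum y w
      have hwn : ‖w‖ ≤ ‖z‖ + c * ‖y‖ := by
        rw [hw]
        refine le_trans (norm_sub_le _ _) ?_
        gcongr
        exact ((Cinv.comp B).le_opNorm y)
      have hKpos : (0:ℝ) < 2 + 2 * c ^ 2 := by positivity
      have hεK : min ε₁ ε₂ / (2 + 2 * c ^ 2) * (2 + 2 * c ^ 2) = min ε₁ ε₂ := by
        field_simp
      have hm1 : min ε₁ ε₂ ≤ ε₁ := min_le_left _ _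
      have hm2 : min ε₁ ε₂ ≤ ε₂ := min_le_right _ _
      have hmpos : 0 < min ε₁ ε₂ := lt_min hε₁ hε₂
      have hwsq : ‖w‖ ^ 2 ≤ 2 * ‖z‖ ^ 2 + 2 * c ^ 2 * ‖y‖ ^ 2 := by
        nlinarith [norm_nonneg w, norm_nonneg z, norm_nonneg y, sq_nonneg (‖z‖ - c * ‖y‖)]
      rw [hnx]
      have hd0 : 0 ≤ min ε₁ ε₂ / (2 + 2 * c ^ 2) := le_of_lt (div_pos hmpos hKpos)
      have k1 := mul_le_mul_of_nonneg_left hwsq hd0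
      have k2 := mul_le_mul_of_nonneg_right hm1 (sq_nonneg ‖y‖)
      have k3 := mul_le_mul_of_nonneg_right hm2 (sq_nonneg ‖z‖)
      have k5 : 0 ≤ min ε₁ ε₂ / (2 + 2 * c ^ 2) * ‖y‖ ^ 2 :=
        mul_nonneg hd0 (sq_nonneg _)
      have k6 : 0 ≤ min ε₁ ε₂ / (2 + 2 * c ^ 2) * (c ^ 2 * ‖z‖ ^ 2) :=
        mul_nonneg hd0 (mul_nonneg (sq_nonneg _) (sq_nonneg _))
      have k7 : min ε₁ ε₂ / (2 + 2 * c ^ 2) * (2 + 2 * c ^ 2) * ‖y‖ ^ 2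
          = min ε₁ ε₂ * ‖y‖ ^ 2 := by rw [hεK]
      have k8 : min ε₁ ε₂ / (2 + 2 * c ^ 2) * (2 + 2 * c ^ 2) * ‖z‖ ^ 2
          = min ε₁ ε₂ * ‖z‖ ^ 2 := by rw [hεK]
      nlinarith [k1, k2, k3, k5, k6, k7, k8, h1, h2]
end

section
/- For every λ ∈ ℝ and every y ∈ 𝔥₂ one has q_λ(y) = ‖y‖²_𝔥 − λ·Σ_{k=1}^{n−1} ζ_k·y(α_k)², i.e. ∫₀¹(y′² + λ·P·((y²)′)) dx = ∫₀¹ y′² dx − λ·Σ_{k=1}^{n−1} ζ_k·y(α_k)². -/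
open MeasureTheory Set Filter Topology

/-- `Yf g x = ∫₀ˣ g(t) dt` : the element of `W̊₂¹[0,1]` with derivative `g`. -/
noncomputable def Yf (g : ℝ → ℝ) (x : ℝ) : ℝ := ∫ t in (0:ℝ)..x, g t

/-- The quadratic form `q_λ(y) = ∫₀¹ (y'² + λ·P·((y²)')) dx` for `y = Yf g`,
using `(y²)' = 2·y·y'`. -/
noncomputable def qform (P : ℝ → ℝ) (lam : ℝ) (g : ℝ → ℝ) : ℝ :=
  (∫ t in (0:ℝ)..1, (g t) ^ 2)
    + lam * ∫ t in (0:ℝ)..1, P t * (2 * Yf g t * g t)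

/-- The derivative of the piecewise linear hat function `e` with nodes `γ < c < δ`. -/
noncomputable def ekderiv (γ c δ : ℝ) (x : ℝ) : ℝ :=
  if x ∈ Ioc γ c then 1 / (c - γ)
  else if x ∈ Ioc c δ then -(1 / (δ - c))
  else 0

namespace Stmt10

lemma ek_up {γ c δ x : ℝ} (h1 : γ < x) (h2 : x ≤ c) : ekderiv γ c δ x = 1 / (c - γ) := by
  unfold ekderiv; rw [if_pos ⟨h1, h2⟩]

lemma ek_down {γ c δ x : ℝ} (h1 : c < x) (h2 : x ≤ δ) : ekderiv γ c δ x = -(1 / (δ - c)) := by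
  unfold ekderiv
  rw [if_neg, if_pos ⟨h1, h2⟩]
  rintro ⟨_, h⟩; exact absurd h (not_le.2 h1)

lemma ek_left {γ c δ x : ℝ} (hγc : γ ≤ c) (h : x ≤ γ) : ekderiv γ c δ x = 0 := by
  unfold ekderiv
  rw [if_neg, if_neg]
  · rintro ⟨h1, _⟩; exact absurd h1 (not_lt.2 (h.trans hγc))
  · rintro ⟨h1, _⟩; exact absurd h1 (not_lt.2 h)

lemma ek_right {γ c δ x : ℝ} (hcδ : c ≤ δ) (h : δ < x) : ekderiv γ c δ x = 0 := by
  unfold ekderiv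
  rw [if_neg, if_neg]
  · rintro ⟨_, h2⟩; exact absurd h2 (not_le.2 h)
  · rintro ⟨_, h2⟩; exact absurd h2 (not_le.2 (lt_of_le_of_lt hcδ h))

lemma ek_abs_le (γ c δ x : ℝ) : |ekderiv γ c δ x| ≤ |1 / (c - γ)| + |1 / (δ - c)| := by
  unfold ekderiv
  split_ifs with h1 h2
  · nlinarith [abs_nonneg (1 / (δ - c))]
  · rw [abs_neg]; nlinarith [abs_nonneg (1 / (c - γ))]
  · simp [abs_nonneg]; positivity

lemma ek_measurable (γ c δ : ℝ) : Measurable (ekderiv γ c δ) := by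
  unfold ekderiv
  exact Measurable.ite measurableSet_Ioc measurable_const
    (Measurable.ite measurableSet_Ioc measurable_const measurable_const)

lemma intervalIntegrable_of_bounded {f : ℝ → ℝ} {M : ℝ} (hmeas : Measurable f)
    (hbd : ∀ x, |f x| ≤ M) (x y : ℝ) : IntervalIntegrable f volume x y := by
  rw [intervalIntegrable_iff]
  haveI : IsFiniteMeasure (volume.restrict (uIoc x y)) :=
    ⟨by rw [Measure.restrict_apply_univ]; exact measure_Ioc_lt_top⟩
  exact (integrable_const M).mono' hmeas.aestronglyMeasurable (ae_of_all _ hbd)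

lemma ek_intervalIntegrable (γ c δ x y : ℝ) : IntervalIntegrable (ekderiv γ c δ) volume x y :=
  intervalIntegrable_of_bounded (ek_measurable γ c δ) (ek_abs_le γ c δ) x y

lemma int_ek_zero_left {γ c δ x : ℝ} (h0 : 0 ≤ x) (h1 : x ≤ γ) (hγc : γ ≤ c) :
    ∫ t in (0:ℝ)..x, ekderiv γ c δ t = 0 := by
  have : ∫ t in (0:ℝ)..x, ekderiv γ c δ t = ∫ t in (0:ℝ)..x, (0:ℝ) := by
    apply intervalIntegral.integral_congr_ae
    apply ae_of_all
    intro t ht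
    rw [uIoc_of_le h0] at ht
    exact ek_left hγc (ht.2.trans h1)
  rw [this]; simp

lemma int_ek_zero_full {γ c δ x : ℝ} (h0 : 0 ≤ γ) (h1 : γ < c) (h2 : c < δ) (h3 : δ ≤ x) :
    ∫ t in (0:ℝ)..x, ekderiv γ c δ t = 0 := by
  have i1 := ek_intervalIntegrable γ c δ 0 γ
  have i2 := ek_intervalIntegrable γ c δ γ c
  have i3 := ek_intervalIntegrable γ c δ c δ
  have i4 := ek_intervalIntegrable γ c δ δ x
  have e1 : ∫ t in (0:ℝ)..γ, ekderiv γ c δ t = 0 := by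
    have : ∫ t in (0:ℝ)..γ, ekderiv γ c δ t = ∫ t in (0:ℝ)..γ, (0:ℝ) := by
      apply intervalIntegral.integral_congr_ae
      apply ae_of_all; intro t ht
      rw [uIoc_of_le h0] at ht
      exact ek_left h1.le ht.2
    rw [this]; simp
  have e2 : ∫ t in γ..c, ekderiv γ c δ t = 1 := by
    have : ∫ t in γ..c, ekderiv γ c δ t = ∫ t in γ..c, (1 / (c - γ)) := by
      apply intervalIntegral.integral_congr_ae
      apply ae_of_all; intro t ht
      rw [uIoc_of_le h1.le] at ht
      exact ek_up ht.1 ht.2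
    rw [this, intervalIntegral.integral_const, smul_eq_mul, mul_one_div,
      div_self (sub_ne_zero.2 (ne_of_gt h1))]
  have e3 : ∫ t in c..δ, ekderiv γ c δ t = -1 := by
    have : ∫ t in c..δ, ekderiv γ c δ t = ∫ t in c..δ, (-(1 / (δ - c))) := by
      apply intervalIntegral.integral_congr_ae
      apply ae_of_all; intro t ht
      rw [uIoc_of_le h2.le] at ht
      exact ek_down ht.1 ht.2
    rw [this, intervalIntegral.integral_const, smul_eq_mul, mul_neg, mul_one_div,
      div_self (sub_ne_zero.2 (ne_of_gt h2))]
  have e4 : ∫ t in δ..x, ekderiv γ c δ t = 0 := by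
    have : ∫ t in δ..x, ekderiv γ c δ t = ∫ t in δ..x, (0:ℝ) := by
      apply intervalIntegral.integral_congr_ae
      apply ae_of_all; intro t ht
      rw [uIoc_of_le h3] at ht
      exact ek_right h2.le ht.1
    rw [this]; simp
  have := intervalIntegral.integral_add_adjacent_intervals (i1.trans i2) (i3.trans i4)
  rw [← intervalIntegral.integral_add_adjacent_intervals i1 i2,
    ← intervalIntegral.integral_add_adjacent_intervals i3 i4] at this
  rw [← this, e1, e2, e3, e4]; ring

lemma ek_eqOn {γ c δ u v x w : ℝ} (hγc : γ < c) (hcδ : c < δ)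
    (h : v ≤ γ ∨ (γ ≤ u ∧ v ≤ c) ∨ (c ≤ u ∧ v ≤ δ) ∨ δ ≤ u)
    (hx : x ∈ Ioo u v) (hw : w ∈ Ioo u v) :
    ekderiv γ c δ x = ekderiv γ c δ w := by
  obtain ⟨hx1, hx2⟩ := hx
  obtain ⟨hw1, hw2⟩ := hw
  rcases h with h | ⟨h1, h2⟩ | ⟨h1, h2⟩ | h
  · rw [ek_left hγc.le (hx2.le.trans h), ek_left hγc.le (hw2.le.trans h)]
  · rw [ek_up (lt_of_le_of_lt h1 hx1) (hx2.le.trans h2),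
      ek_up (lt_of_le_of_lt h1 hw1) (hw2.le.trans h2)]
  · rw [ek_down (lt_of_le_of_lt h1 hx1) (hx2.le.trans h2),
      ek_down (lt_of_le_of_lt h1 hw1) (hw2.le.trans h2)]
  · rw [ek_right hcδ.le (lt_of_le_of_lt h hx1), ek_right hcδ.le (lt_of_le_of_lt h hw1)]

lemma null_image {u s : ℝ} (hs : 0 < s) {S : Set ℝ} (hS : volume S = 0) :
    volume ((fun t => u + s * t) '' S) = 0 := by
  have himg : (fun t => u + s * t) '' S = (fun x => x - u) ⁻¹' ((fun y => s⁻¹ * y) ⁻¹' S) := by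
    ext x
    simp only [mem_image, mem_preimage]
    constructor
    · rintro ⟨t, ht, rfl⟩
      have : s⁻¹ * (u + s * t - u) = t := by field_simp; ring
      rwa [this]
    · intro hx
      exact ⟨s⁻¹ * (x - u), hx, by field_simp; ring⟩
  rw [himg]
  have h1 : volume ((fun y => s⁻¹ * y) ⁻¹' S) = 0 := by
    rw [Real.volume_preimage_mul_left (inv_ne_zero (ne_of_gt hs)), hS, mul_zero]
  have h2 : (fun x : ℝ => x - u) ⁻¹' ((fun y => s⁻¹ * y) ⁻¹' S)
      = (fun x : ℝ => x + (-u)) ⁻¹' ((fun y => s⁻¹ * y) ⁻¹' S) := by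
    simp [sub_eq_add_neg]
  rw [h2]
  rw [measure_preimage_add_right volume (-u) _]
  exact h1

lemma ae_transfer {u s e f u' v' : ℝ} (hs : 0 < s) (he : 0 ≤ e) (hf : f ≤ 1)
    (hu : u' = u + s * e) (hv : v' = u + s * f) {Q : ℝ → Prop}
    (h : ∀ᵐ t ∂(volume.restrict (Ioo (0:ℝ) 1)), t ∈ Ioo e f → Q (u + s * t)) :
    ∀ᵐ x ∂(volume.restrict (Ioo u' v')), Q x := by
  rw [ae_iff] at h ⊢
  rw [Measure.restrict_apply' measurableSet_Ioo] at h ⊢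
  refine measure_mono_null ?_ (null_image (u := u) hs h)
  rintro x ⟨hQ, hx1, hx2⟩
  rw [hu] at hx1; rw [hv] at hx2
  have ht1 : e < s⁻¹ * (x - u) := by
    rw [lt_inv_mul_iff₀ hs]; linarith
  have ht2 : s⁻¹ * (x - u) < f := by
    rw [inv_mul_lt_iff₀ hs]; linarith
  refine ⟨s⁻¹ * (x - u), ⟨?_, ?_, ?_⟩, ?_⟩
  · intro hc
    have hx : u + s * (s⁻¹ * (x - u)) = x := by field_simp; ring
    rw [hx] at hc
    exact hQ (hc ⟨ht1, ht2⟩)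
  · linarith
  · linarith
  · field_simp; ring

lemma ae_cond_of_restrict {s t : Set ℝ} (hs : MeasurableSet s) (ht : MeasurableSet t)
    {Q : ℝ → Prop} (h : ∀ᵐ x ∂(volume.restrict s), Q x) :
    ∀ᵐ x ∂(volume.restrict t), x ∈ s → Q x := by
  rw [ae_iff] at h ⊢
  rw [Measure.restrict_apply' hs] at h
  rw [Measure.restrict_apply' ht]
  refine measure_mono_null ?_ h
  rintro x ⟨hx, _⟩
  push_neg at hx
  exact ⟨hx.2, hx.1⟩

lemma ae_Ioc_cond {u v : ℝ} {Q : ℝ → Prop} (h : ∀ᵐ x ∂(volume.restrict (Ioo u v)), Q x) :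
    ∀ᵐ x : ℝ, x ∈ uIoc u v → u ≤ v → Q x := by
  rw [ae_iff] at h
  rw [Measure.restrict_apply' measurableSet_Ioo] at h
  rw [ae_iff]
  have hv : volume ({v} : Set ℝ) = 0 := Real.volume_singleton
  refine measure_mono_null ?_ (by rw [measure_union_null h hv] :
    volume (({x | ¬Q x} ∩ Ioo u v) ∪ {v}) = 0)
  intro x hx
  simp only [mem_setOf_eq, not_forall] at hx
  obtain ⟨h1, h2, h3⟩ := hx
  rw [uIoc_of_le h2] at h1
  by_cases hxv : x = v
  · exact Or.inr (by simp [hxv])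
  · exact Or.inl ⟨h3, h1.1, lt_of_le_of_ne h1.2 hxv⟩

lemma ae_ne (v : ℝ) : ∀ᵐ x : ℝ, x ≠ v := by
  rw [ae_iff]
  have : {x : ℝ | ¬x ≠ v} = {v} := by ext x; simp
  rw [this]; exact Real.volume_singleton

lemma Yf_affine {g : ℝ → ℝ} {u v s : ℝ}
    (hgi : ∀ x y : ℝ, IntervalIntegrable g volume x y)
    (hgc : ∀ x ∈ Ioo u v, g x = s) :
    ∀ t ∈ Icc u v, Yf g t = Yf g u + s * (t - u) := by
  intro t ht
  have h1 : Yf g t = Yf g u + ∫ x in u..t, g x := by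
    unfold Yf
    rw [intervalIntegral.integral_add_adjacent_intervals (hgi 0 u) (hgi u t)]
  have h2 : ∫ x in u..t, g x = ∫ x in u..t, s := by
    apply intervalIntegral.integral_congr_ae
    filter_upwards [ae_ne t] with x hx hmem
    rw [uIoc_of_le ht.1] at hmem
    exact hgc x ⟨hmem.1, lt_of_lt_of_le (lt_of_le_of_ne hmem.2 hx) ht.2⟩
  rw [h1, h2, intervalIntegral.integral_const, smul_eq_mul]
  ring

lemma key {P g : ℝ → ℝ} {u v C s : ℝ} (huv : u ≤ v)
    (hgi : ∀ x y : ℝ, IntervalIntegrable g volume x y)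
    (hPc : ∀ᵐ x ∂(volume.restrict (Ioo u v)), P x = C)
    (hgc : ∀ x ∈ Ioo u v, g x = s) :
    ∫ t in u..v, P t * (2 * Yf g t * g t) = C * ((Yf g v)^2 - (Yf g u)^2) := by
  have hY := Yf_affine hgi hgc
  have hYv : Yf g v = Yf g u + s * (v - u) := hY v ⟨huv, le_refl v⟩
  have hcong : ∫ t in u..v, P t * (2 * Yf g t * g t)
      = ∫ t in u..v, ((C * (2 * Yf g u * s) - 2 * C * s^2 * u) + (2 * C * s^2) * t) := by
    apply intervalIntegral.integral_congr_ae
    filter_upwards [ae_Ioc_cond hPc, ae_ne v] with x hPx hxv hmem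
    have hxIoc : x ∈ Ioc u v := by rwa [uIoc_of_le huv] at hmem
    have hxIoo : x ∈ Ioo u v := ⟨hxIoc.1, lt_of_le_of_ne hxIoc.2 hxv⟩
    rw [hPx hmem huv, hgc x hxIoo, hY x ⟨hxIoc.1.le, hxIoc.2⟩]
    ring
  rw [hcong, intervalIntegral.integral_add intervalIntegrable_const
    ((intervalIntegral.intervalIntegrable_id).const_mul _),
    intervalIntegral.integral_const_mul, integral_id, intervalIntegral.integral_const,
    hYv, smul_eq_mul]
  ring

lemma keyzero {P g : ℝ → ℝ} {u v : ℝ} (huv : u ≤ v)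
    (hgc : ∀ x ∈ Ioo u v, g x = 0) :
    ∫ t in u..v, P t * (2 * Yf g t * g t) = 0 := by
  have : ∫ t in u..v, P t * (2 * Yf g t * g t) = ∫ t in u..v, (0:ℝ) := by
    apply intervalIntegral.integral_congr_ae
    filter_upwards [ae_ne v] with x hxv hmem
    have hxIoc : x ∈ Ioc u v := by rwa [uIoc_of_le huv] at hmem
    have hxIoo : x ∈ Ioo u v := ⟨hxIoc.1, lt_of_le_of_ne hxIoc.2 hxv⟩
    rw [hgc x hxIoo]
    ring
  rw [this]; simp

end Stmt10

open Stmt10 in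
theorem statement10
    (n m : ℕ) (hn : 2 ≤ n) (hm1 : 1 ≤ m) (hmn : m ≤ n)
    (a β d : ℕ → ℝ) (α : ℕ → ℝ)
    (ha : ∀ k, 1 ≤ k → k ≤ n → 0 < a k)
    (hsum : ∑ k ∈ Finset.Icc 1 n, a k = 1)
    (hα0 : α 0 = 0)
    (hα : ∀ k, 1 ≤ k → k ≤ n → α k = α (k - 1) + a k)
    (hd : ∀ k, 1 ≤ k → k ≤ n → k ≠ m → d k = 0)
    (hdm : d m ≠ 0)
    (hcontr : a m * |d m| < 1)
    (P : ℝ → ℝ)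
    (hP : MemLp P 2 (volume.restrict (Ioo (0:ℝ) 1)))
    (hss : ∀ k, 1 ≤ k → k ≤ n →
      ∀ᵐ t ∂(volume.restrict (Ioo (0:ℝ) 1)),
        P (α (k - 1) + a k * t) = β k + d k * P t)
    (γ δ : ℕ → ℝ)
    (hγ : ∀ k, 1 ≤ k → k ≤ n - 1 →
      γ k = if k = m then α m - a m * a n else α (k - 1))
    (hδ : ∀ k, 1 ≤ k → k ≤ n - 1 →
      δ k = if k + 1 = m then α (m - 1) + a m * a 1 else α (k + 1))
    (ζ : ℕ → ℝ)
    (hζ : ∀ k, 1 ≤ k → k ≤ n - 1 → ζ k =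
      if k + 1 = m then β m - β (m - 1) + d m * β 1
      else if k = m then β (m + 1) - β m - d m * β n
      else β (k + 1) - β k)
    (lam : ℝ)
    -- `y = Σ c_k e_k ∈ 𝔥₂`, represented by its derivative `g`
    (c : ℕ → ℝ) (g : ℝ → ℝ)
    (hg : g = fun t =>
      ∑ k ∈ Finset.Icc 1 (n - 1), c k * ekderiv (γ k) (α k) (δ k) t) :
    -- `q_λ(y) = ‖y‖²_𝔥 − λ·Σ_{k=1}^{n−1} ζ_k·y(α_k)²`
    qform P lam g
      = (∫ t in (0:ℝ)..1, (g t) ^ 2)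
        - lam * ∑ k ∈ Finset.Icc 1 (n - 1), ζ k * (Yf g (α k)) ^ 2 := by
  classical
  -- basic facts about α
  have hmono : ∀ j, j ≤ n → ∀ i, i ≤ j → α i ≤ α j := by
    intro j
    induction j with
    | zero => intro _ i hi; rw [Nat.le_zero.mp hi]
    | succ k ih =>
      intro hk i hi
      have hk1 : α (k+1) = α k + a (k+1) := by
        have h := hα (k+1) (by omega) hk
        simpa using h
      rcases Nat.lt_or_ge i (k+1) with h | h
      · have h1 := ih (by omega) i (by omega)
        have h2 := ha (k+1) (by omega) hk
        linarith
      · have : i = k+1 := by omega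
        rw [this]
  have hlt : ∀ i j, i < j → j ≤ n → α i < α j := by
    intro i j hij hj
    have h1 : α i ≤ α (j-1) := hmono (j-1) (by omega) i (by omega)
    have h2 : α j = α (j-1) + a j := hα j (by omega) hj
    have h3 := ha j (by omega) hj
    linarith
  have hαsum : ∀ k, k ≤ n → α k = ∑ j ∈ Finset.Icc 1 k, a j := by
    intro k
    induction k with
    | zero => intro _; simpa using hα0
    | succ k ih =>
      intro hk
      rw [hα (k+1) (by omega) hk]
      simp only [Nat.add_sub_cancel]
      rw [ih (by omega), ← Finset.sum_Icc_succ_top (by omega : 1 ≤ k+1)]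
  have hαn : α n = 1 := by rw [hαsum n le_rfl, hsum]
  have hale : ∀ j, 1 ≤ j → j ≤ n → a j ≤ 1 := by
    intro j h1 h2
    rw [← hsum]
    exact Finset.single_le_sum
      (fun i hi => (ha i (Finset.mem_Icc.mp hi).1 (Finset.mem_Icc.mp hi).2).le)
      (Finset.mem_Icc.mpr ⟨h1, h2⟩)
  have h1n : a 1 + a n ≤ 1 := by
    rw [← hsum]
    have hsub : ({1, n} : Finset ℕ) ⊆ Finset.Icc 1 n := by
      intro x hx
      simp only [Finset.mem_insert, Finset.mem_singleton] at hx
      rcases hx with rfl | rfl <;> (rw [Finset.mem_Icc]; omega)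
    have := Finset.sum_le_sum_of_subset_of_nonneg hsub
      (fun i hi _ => (ha i (Finset.mem_Icc.mp hi).1 (Finset.mem_Icc.mp hi).2).le)
    rwa [Finset.sum_pair (by omega : (1:ℕ) ≠ n)] at this
  have ham : 0 < a m := ha m hm1 hmn
  have ha1 : 0 < a 1 := ha 1 le_rfl (by omega)
  have han : 0 < a n := ha n (by omega) le_rfl
  have hαm : α m = α (m-1) + a m := hα m hm1 hmn
  set p : ℝ := α (m-1) + a m * a 1 with hpdef
  set q : ℝ := α m - a m * a n with hqdef
  have hmp : α (m-1) < p := by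
    have := mul_pos ham ha1; rw [hpdef]; linarith
  have hqm : q < α m := by
    have := mul_pos ham han; rw [hqdef]; linarith
  have hpq : p ≤ q := by
    rw [hpdef, hqdef, hαm]
    nlinarith [mul_nonneg ham.le (by linarith : (0:ℝ) ≤ 1 - a 1 - a n)]
  have hαIcc : ∀ k, k ≤ n → α k ∈ Icc (0:ℝ) 1 := by
    intro k hk
    constructor
    · rw [← hα0]; exact hmono k hk 0 (by omega)
    · rw [← hαn]; exact hmono n le_rfl k hk
  have hpIcc : p ∈ Icc (0:ℝ) 1 := by
    constructor
    · linarith [(hαIcc (m-1) (by omega)).1, hmp]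
    · linarith [hpq, hqm, (hαIcc m hmn).2]
  have hqIcc : q ∈ Icc (0:ℝ) 1 := by
    constructor
    · linarith [hpIcc.1, hpq]
    · linarith [hqm, (hαIcc m hmn).2]
  -- γ δ facts
  have hγδ : ∀ j, 1 ≤ j → j ≤ n-1 →
      α (j-1) ≤ γ j ∧ γ j < α j ∧ α j < δ j ∧ δ j ≤ α (j+1) := by
    intro j h1 h2
    rw [hγ j h1 h2, hδ j h1 h2]
    refine ⟨?_, ?_, ?_, ?_⟩
    · split_ifs with h
      · rw [h]; linarith [hmp, hpq]
      · exact le_refl _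
    · split_ifs with h
      · rw [h]; exact hqm
      · exact hlt (j-1) j (by omega) (by omega)
    · split_ifs with h
      · rw [show j = m - 1 from by omega]; exact hmp
      · exact hlt j (j+1) (by omega) (by omega)
    · split_ifs with h
      · rw [h]; linarith [hpq, hqm]
      · exact le_refl _
  have hδle : ∀ j, 1 ≤ j → j ≤ n-1 → j + 1 ≤ m → δ j ≤ p := by
    intro j h1 h2 h3
    rw [hδ j h1 h2]
    split_ifs with h
    · exact le_refl _
    · calc α (j+1) ≤ α (m-1) := hmono (m-1) (by omega) (j+1) (by omega)
        _ ≤ p := hmp.le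
  have hγge : ∀ j, 1 ≤ j → j ≤ n-1 → m ≤ j → q ≤ γ j := by
    intro j h1 h2 h3
    rw [hγ j h1 h2]
    split_ifs with h
    · exact le_refl _
    · calc q ≤ α m := hqm.le
        _ ≤ α (j-1) := hmono (j-1) (by omega) m (by omega)
  -- g : boundedness, measurability, integrability
  set G : ℝ := ∑ j ∈ Finset.Icc 1 (n-1), |c j| * (|1 / (α j - γ j)| + |1 / (δ j - α j)|)
    with hGdef
  have hGnn : 0 ≤ G := by
    apply Finset.sum_nonneg
    intro j _
    positivity
  have hgbd : ∀ x, |g x| ≤ G := by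
    intro x
    rw [hg, hGdef]
    refine le_trans (Finset.abs_sum_le_sum_abs _ _) (Finset.sum_le_sum ?_)
    intro j _
    rw [abs_mul]
    exact mul_le_mul_of_nonneg_left (ek_abs_le _ _ _ _) (abs_nonneg _)
  have hgmeas : Measurable g := by
    rw [hg]
    exact Finset.measurable_sum _ (fun j _ => (ek_measurable _ _ _).const_mul _)
  have hgi : ∀ x y : ℝ, IntervalIntegrable g volume x y :=
    intervalIntegrable_of_bounded hgmeas hgbd
  have hYcont : Continuous (Yf g) := intervalIntegral.continuous_primitive hgi 0
  have hYbd : ∀ x ∈ Icc (0:ℝ) 1, |Yf g x| ≤ G := by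
    intro x hx
    have h := intervalIntegral.norm_integral_le_of_norm_le_const (C := G) (f := g)
      (a := 0) (b := x) (fun t _ => by rw [Real.norm_eq_abs]; exact hgbd t)
    rw [Real.norm_eq_abs] at h
    have hx1 : |x - 0| ≤ 1 := by
      rw [sub_zero, abs_le]; exact ⟨by linarith [hx.1], hx.2⟩
    calc |Yf g x| ≤ G * |x - 0| := h
      _ ≤ G * 1 := mul_le_mul_of_nonneg_left hx1 hGnn
      _ = G := mul_one G
  -- integrability of the main integrand
  have hΦIoo : IntegrableOn (fun t => P t * (2 * Yf g t * g t)) (Ioo (0:ℝ) 1) volume := by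
    haveI : IsFiniteMeasure (volume.restrict (Ioo (0:ℝ) 1)) :=
      ⟨by rw [Measure.restrict_apply_univ]; exact measure_Ioo_lt_top⟩
    have hPint : Integrable P (volume.restrict (Ioo (0:ℝ) 1)) :=
      hP.integrable (by norm_num)
    have hfactor : Integrable (fun x => (2 * Yf g x * g x) * P x)
        (volume.restrict (Ioo (0:ℝ) 1)) := by
      apply hPint.bdd_mul (c := 2 * G * G)
      · exact (((hYcont.measurable.const_mul 2).mul hgmeas)).aestronglyMeasurable
      · filter_upwards [ae_restrict_mem measurableSet_Ioo] with x hx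
        have h1 := hYbd x ⟨hx.1.le, hx.2.le⟩
        have h2 := hgbd x
        rw [Real.norm_eq_abs, abs_mul, abs_mul, abs_two]
        nlinarith [abs_nonneg (Yf g x), abs_nonneg (g x)]
    exact hfactor.congr (ae_of_all _ (fun x => mul_comm _ _))
  have hΦIcc : IntegrableOn (fun t => P t * (2 * Yf g t * g t)) (Icc (0:ℝ) 1) volume := by
    unfold IntegrableOn
    rw [← Measure.restrict_congr_set Ioo_ae_eq_Icc]
    exact hΦIoo
  have hΦii : ∀ x y : ℝ, x ∈ Icc (0:ℝ) 1 → y ∈ Icc (0:ℝ) 1 →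
      IntervalIntegrable (fun t => P t * (2 * Yf g t * g t)) volume x y := by
    intro x y hx hy
    exact (hΦIcc.mono_set (uIcc_subset_Icc hx hy)).intervalIntegrable
  -- Yf g values at special points
  have hYsum : ∀ x : ℝ, Yf g x
      = ∑ j ∈ Finset.Icc 1 (n-1), c j * ∫ t in (0:ℝ)..x, ekderiv (γ j) (α j) (δ j) t := by
    intro x
    unfold Yf
    rw [hg]
    rw [intervalIntegral.integral_finset_sum
      (fun j _ => (ek_intervalIntegrable _ _ _ _ _).const_mul _)]
    exact Finset.sum_congr rfl (fun j _ => intervalIntegral.integral_const_mul _ _)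
  have hY0 : Yf g 0 = 0 := intervalIntegral.integral_same
  have hYzero : ∀ x : ℝ, 0 ≤ x →
      (∀ j, 1 ≤ j → j ≤ n-1 → δ j ≤ x ∨ x ≤ γ j) → Yf g x = 0 := by
    intro x h0 hcond
    rw [hYsum x]
    apply Finset.sum_eq_zero
    intro j hj
    obtain ⟨hj1, hj2⟩ := Finset.mem_Icc.mp hj
    obtain ⟨f1, f2, f3, _⟩ := hγδ j hj1 hj2
    have hγ0 : 0 ≤ γ j := le_trans (by rw [← hα0]; exact hmono (j-1) (by omega) 0 (by omega)) f1
    rcases hcond j hj1 hj2 with h | h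
    · rw [int_ek_zero_full hγ0 f2 f3 h]; ring
    · rw [int_ek_zero_left h0 h f2.le]; ring
  have hY1 : Yf g 1 = 0 := by
    apply hYzero 1 (by norm_num)
    intro j hj1 hj2
    exact Or.inl (le_trans (hγδ j hj1 hj2).2.2.2 (by rw [← hαn]; exact hmono n le_rfl (j+1) (by omega)))
  have hYp : Yf g p = 0 := by
    apply hYzero p hpIcc.1
    intro j hj1 hj2
    by_cases hjm : j + 1 ≤ m
    · exact Or.inl (hδle j hj1 hj2 hjm)
    · exact Or.inr (le_trans hpq (hγge j hj1 hj2 (by omega)))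
  have hYq : Yf g q = 0 := by
    apply hYzero q hqIcc.1
    intro j hj1 hj2
    by_cases hjm : j + 1 ≤ m
    · exact Or.inl (le_trans (hδle j hj1 hj2 hjm) hpq)
    · exact Or.inr (hγge j hj1 hj2 (by omega))
  -- constancy of g on subintervals
  have hgconst : ∀ u v : ℝ, (∀ j, 1 ≤ j → j ≤ n-1 →
        (v ≤ γ j ∨ (γ j ≤ u ∧ v ≤ α j) ∨ (α j ≤ u ∧ v ≤ δ j) ∨ δ j ≤ u)) →
      ∀ x ∈ Ioo u v, g x = g ((u+v)/2) := by
    intro u v hcond x hx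
    have hw : (u+v)/2 ∈ Ioo u v := ⟨by linarith [hx.1, hx.2], by linarith [hx.1, hx.2]⟩
    simp only [hg]
    apply Finset.sum_congr rfl
    intro j hj
    obtain ⟨hj1, hj2⟩ := Finset.mem_Icc.mp hj
    obtain ⟨_, f2, f3, _⟩ := hγδ j hj1 hj2
    rw [ek_eqOn f2 f3 (hcond j hj1 hj2) hx hw]
  have hgzero : ∀ u v : ℝ, (∀ j, 1 ≤ j → j ≤ n-1 → (v ≤ γ j ∨ δ j ≤ u)) →
      ∀ x ∈ Ioo u v, g x = 0 := by
    intro u v hcond x hx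
    simp only [hg]
    apply Finset.sum_eq_zero
    intro j hj
    obtain ⟨hj1, hj2⟩ := Finset.mem_Icc.mp hj
    obtain ⟨_, f2, f3, _⟩ := hγδ j hj1 hj2
    rcases hcond j hj1 hj2 with h | h
    · rw [ek_left f2.le (hx.2.le.trans h)]; ring
    · rw [ek_right f3.le (lt_of_le_of_lt h hx.1)]; ring
  -- geometric conditions for each interval of the partition
  have condk : ∀ k, 1 ≤ k → k ≤ n → k ≠ m → ∀ j, 1 ≤ j → j ≤ n-1 →
      (α k ≤ γ j ∨ (γ j ≤ α (k-1) ∧ α k ≤ α j) ∨ (α j ≤ α (k-1) ∧ α k ≤ δ j)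
        ∨ δ j ≤ α (k-1)) := by
    intro k h1 h2 hk j hj1 hj2
    by_cases hc1 : k + 1 ≤ j
    · exact Or.inl (le_trans (hmono (j-1) (by omega) k (by omega)) (hγδ j hj1 hj2).1)
    by_cases hc2 : j = k
    · refine Or.inr (Or.inl ⟨?_, ?_⟩)
      · rw [hγ j hj1 hj2, if_neg (by omega), show j - 1 = k - 1 from by omega]
      · rw [hc2]
    by_cases hc3 : j + 1 = k
    · refine Or.inr (Or.inr (Or.inl ⟨?_, ?_⟩))
      · exact le_of_eq (congrArg α (by omega))
      · rw [hδ j hj1 hj2, if_neg (by omega), hc3]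
    · refine Or.inr (Or.inr (Or.inr ?_))
      exact le_trans (hγδ j hj1 hj2).2.2.2 (hmono (k-1) (by omega) (j+1) (by omega))
  have condL : 2 ≤ m → ∀ j, 1 ≤ j → j ≤ n-1 →
      (p ≤ γ j ∨ (γ j ≤ α (m-1) ∧ p ≤ α j) ∨ (α j ≤ α (m-1) ∧ p ≤ δ j)
        ∨ δ j ≤ α (m-1)) := by
    intro hm2 j hj1 hj2
    by_cases hc1 : m ≤ j
    · exact Or.inl (hpq.trans (hγge j hj1 hj2 hc1))
    by_cases hc2 : j + 1 = m
    · refine Or.inr (Or.inr (Or.inl ⟨?_, ?_⟩))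
      · exact le_of_eq (congrArg α (by omega))
      · rw [hδ j hj1 hj2, if_pos hc2]
    · refine Or.inr (Or.inr (Or.inr ?_))
      rw [hδ j hj1 hj2, if_neg hc2]
      exact le_trans (hmono (m-1) (by omega) (j+1) (by omega)) (le_refl _)
  have condM : ∀ j, 1 ≤ j → j ≤ n-1 → (q ≤ γ j ∨ δ j ≤ p) := by
    intro j hj1 hj2
    by_cases hc1 : j + 1 ≤ m
    · exact Or.inr (hδle j hj1 hj2 hc1)
    · exact Or.inl (hγge j hj1 hj2 (by omega))
  have condR : m ≤ n-1 → ∀ j, 1 ≤ j → j ≤ n-1 →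
      (α m ≤ γ j ∨ (γ j ≤ q ∧ α m ≤ α j) ∨ (α j ≤ q ∧ α m ≤ δ j) ∨ δ j ≤ q) := by
    intro hmn1 j hj1 hj2
    by_cases hc1 : j + 1 ≤ m
    · exact Or.inr (Or.inr (Or.inr (le_trans (hδle j hj1 hj2 hc1) hpq)))
    by_cases hc2 : j = m
    · refine Or.inr (Or.inl ⟨?_, ?_⟩)
      · rw [hγ j hj1 hj2, if_pos hc2]
      · rw [hc2]
    · exact Or.inl (le_trans (hmono (j-1) (by omega) m (by omega)) (hγδ j hj1 hj2).1)
  have condL0 : m = 1 → ∀ j, 1 ≤ j → j ≤ n-1 → (p ≤ γ j ∨ δ j ≤ α (m-1)) := by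
    intro hm1' j hj1 hj2
    exact Or.inl (hpq.trans (hγge j hj1 hj2 (by omega)))
  have condR0 : m = n → ∀ j, 1 ≤ j → j ≤ n-1 → (α m ≤ γ j ∨ δ j ≤ q) := by
    intro hmn' j hj1 hj2
    exact Or.inr (le_trans (hδle j hj1 hj2 (by omega)) hpq)
  -- value of the integral on generic subintervals
  have hIk : ∀ k, 1 ≤ k → k ≤ n → k ≠ m →
      ∫ t in (α (k-1))..(α k), P t * (2 * Yf g t * g t)
        = β k * ((Yf g (α k))^2 - (Yf g (α (k-1)))^2) := by
    intro k h1 h2 hk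
    have huv : α (k-1) ≤ α k := (hlt (k-1) k (by omega) h2).le
    apply key huv hgi ?_ (hgconst (α (k-1)) (α k) (condk k h1 h2 hk))
    apply ae_transfer (ha k h1 h2) (le_refl (0:ℝ)) (le_refl (1:ℝ)) (by ring)
      (by rw [hα k h1 h2]; ring)
    filter_upwards [hss k h1 h2] with t ht _
    rw [ht, hd k h1 h2 hk, zero_mul, add_zero]
  -- the left piece of the m-th interval
  have hImL : ∫ t in (α (m-1))..p, P t * (2 * Yf g t * g t)
      = -((β m + d m * β 1) * (Yf g (α (m-1)))^2) := by
    by_cases hm2 : 2 ≤ m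
    · have hPL : ∀ᵐ x ∂(volume.restrict (Ioo (α (m-1)) p)), P x = β m + d m * β 1 := by
        have hA1 : ∀ᵐ x ∂(volume.restrict (Ioo (α 0) (α 1))), P x = β 1 := by
          apply ae_transfer (ha 1 le_rfl (by omega)) (le_refl (0:ℝ)) (le_refl (1:ℝ))
            (by ring) (by rw [hα 1 le_rfl (by omega)]; ring)
          filter_upwards [hss 1 le_rfl (by omega)] with t ht _
          rw [ht, hd 1 le_rfl (by omega) (by omega), zero_mul, add_zero]
        have hA1' : ∀ᵐ t ∂(volume.restrict (Ioo (0:ℝ) 1)), t ∈ Ioo (α 0) (α 1) → P t = β 1 :=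
          ae_cond_of_restrict measurableSet_Ioo measurableSet_Ioo hA1
        refine ae_transfer (u := α (m-1)) ham (e := α 0) (f := α 1) ?_ ?_ ?_ ?_ ?_
        · exact le_of_eq hα0.symm
        · have := hmono n le_rfl 1 (by omega); linarith [hαn]
        · rw [hα0]; ring
        · rw [hpdef, hα 1 le_rfl (by omega), hα0]; ring
        · filter_upwards [hss m hm1 hmn, hA1'] with t h1 h2 ht
          rw [h1, h2 ht]
      have hk := key hmp.le hgi hPL (hgconst (α (m-1)) p (condL hm2))
      rw [hk, hYp]
      ring
    · have hm1' : m = 1 := by omega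
      have h0 : Yf g (α (m-1)) = 0 := by
        rw [show m - 1 = 0 from by omega, hα0]; exact hY0
      rw [keyzero hmp.le (hgzero (α (m-1)) p (fun j hj1 hj2 =>
        (condL0 hm1' j hj1 hj2))), h0]
      ring
  -- the middle piece
  have hImM : ∫ t in p..q, P t * (2 * Yf g t * g t) = 0 :=
    keyzero hpq (hgzero p q condM)
  -- the right piece
  have hImR : ∫ t in q..(α m), P t * (2 * Yf g t * g t)
      = (β m + d m * β n) * (Yf g (α m))^2 := by
    by_cases hmn1 : m ≤ n-1
    · have hPR : ∀ᵐ x ∂(volume.restrict (Ioo q (α m))), P x = β m + d m * β n := by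
        have hAn : ∀ᵐ x ∂(volume.restrict (Ioo (α (n-1)) (α n))), P x = β n := by
          apply ae_transfer (ha n (by omega) le_rfl) (le_refl (0:ℝ)) (le_refl (1:ℝ))
            (by ring) (by rw [hα n (by omega) le_rfl]; ring)
          filter_upwards [hss n (by omega) le_rfl] with t ht _
          rw [ht, hd n (by omega) le_rfl (by omega), zero_mul, add_zero]
        rw [hαn] at hAn
        have hAn' : ∀ᵐ t ∂(volume.restrict (Ioo (0:ℝ) 1)), t ∈ Ioo (α (n-1)) 1 → P t = β n :=
          ae_cond_of_restrict measurableSet_Ioo measurableSet_Ioo hAn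
        refine ae_transfer (u := α (m-1)) ham (e := α (n-1)) (f := (1:ℝ)) ?_ le_rfl ?_ ?_ ?_
        · rw [← hα0]; exact hmono (n-1) (by omega) 0 (by omega)
        · have hn1 : α (n-1) = 1 - a n := by
            have h := hα n (by omega) le_rfl
            rw [hαn] at h
            linarith
          rw [hqdef, hn1, hαm]; ring
        · rw [hαm]; ring
        · filter_upwards [hss m hm1 hmn, hAn'] with t h1 h2 ht
          rw [h1, h2 ht]
      have hk := key hqm.le hgi hPR (hgconst q (α m) (condR hmn1))
      rw [hk, hYq]
      ring
    · have hmn' : m = n := by omega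
      have h0 : Yf g (α m) = 0 := by rw [hmn', hαn]; exact hY1
      rw [keyzero hqm.le (hgzero q (α m) (condR0 hmn')), h0]
      ring
  -- the full m-th interval
  have hIm : ∫ t in (α (m-1))..(α m), P t * (2 * Yf g t * g t)
      = (β m + d m * β n) * (Yf g (α m))^2 - (β m + d m * β 1) * (Yf g (α (m-1)))^2 := by
    have i1 := hΦii (α (m-1)) p (hαIcc (m-1) (by omega)) hpIcc
    have i2 := hΦii p q hpIcc hqIcc
    have i3 := hΦii q (α m) hqIcc (hαIcc m hmn)
    rw [← intervalIntegral.integral_add_adjacent_intervals (i1.trans i2) i3,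
      ← intervalIntegral.integral_add_adjacent_intervals i1 i2, hImL, hImM, hImR]
    ring
  -- value on every interval of the partition
  have hval : ∀ k ∈ Finset.range n, ∫ t in (α k)..(α (k+1)), P t * (2 * Yf g t * g t)
      = (if k+1 = m then β m + d m * β n else β (k+1)) * (Yf g (α (k+1)))^2
        - (if k+1 = m then β m + d m * β 1 else β (k+1)) * (Yf g (α k))^2 := by
    intro k hk
    rw [Finset.mem_range] at hk
    by_cases hkm : k + 1 = m
    · rw [if_pos hkm, if_pos hkm]
      have hk1 : α k = α (m-1) := congrArg α (by omega)
      have hk2 : α (k+1) = α m := congrArg α (by omega)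
      rw [hk1, hk2, hIm]
    · rw [if_neg hkm, if_neg hkm]
      have := hIk (k+1) (by omega) (by omega) hkm
      rw [show (k+1) - 1 = k from by omega] at this
      rw [this]
      ring
  -- main computation
  have hmain : ∫ t in (0:ℝ)..1, P t * (2 * Yf g t * g t)
      = - ∑ k ∈ Finset.Icc 1 (n-1), ζ k * (Yf g (α k))^2 := by
    have hsplit : ∫ t in (0:ℝ)..1, P t * (2 * Yf g t * g t)
        = ∑ k ∈ Finset.range n, ∫ t in (α k)..(α (k+1)), P t * (2 * Yf g t * g t) := by
      rw [intervalIntegral.sum_integral_adjacent_intervals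
        (fun k hk => hΦii (α k) (α (k+1)) (hαIcc k (by omega)) (hαIcc (k+1) (by omega)))]
      rw [hα0, hαn]
    rw [hsplit, Finset.sum_congr rfl hval]
    obtain ⟨N, rfl⟩ : ∃ N, n = N + 1 := ⟨n-1, by omega⟩
    have hNsimp : N + 1 - 1 = N := by omega
    rw [hNsimp]
    rw [Finset.sum_sub_distrib]
    rw [Finset.sum_range_succ
      (fun k => (if k+1 = m then β m + d m * β (N+1) else β (k+1)) * (Yf g (α (k+1)))^2) N]
    rw [Finset.sum_range_succ'
      (fun k => (if k+1 = m then β m + d m * β 1 else β (k+1)) * (Yf g (α k))^2) N]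
    have hYN : Yf g (α (N+1)) = 0 := by rw [hαn]; exact hY1
    have hY0' : Yf g (α 0) = 0 := by rw [hα0]; exact hY0
    rw [hYN, hY0']
    have hIcc : Finset.Icc 1 N = Finset.Ico 1 (N+1) := by
      rw [Finset.Ico_add_one_right_eq_Icc]
    rw [hIcc, Finset.sum_Ico_eq_sum_range]
    rw [show N + 1 - 1 = N from by omega]
    have e0 : ((0:ℝ))^2 = 0 := by norm_num
    rw [e0, mul_zero, mul_zero, add_zero, add_zero]
    rw [← Finset.sum_sub_distrib, ← Finset.sum_neg_distrib]
    apply Finset.sum_congr rfl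
    intro k hk
    rw [Finset.mem_range] at hk
    rw [Nat.add_comm 1 k, hζ (k+1) (by omega) (by omega)]
    by_cases h1 : k+1+1 = m
    · have h2 : ¬(k+1 = m) := by omega
      rw [if_neg h2, if_pos h1, if_pos h1, show m - 1 = k+1 from by omega]
      ring
    · by_cases h2 : k+1 = m
      · rw [if_pos h2, if_neg h1, if_neg h1, if_pos h2, show m + 1 = k+1+1 from by omega]
        ring
      · rw [if_neg h2, if_neg h1, if_neg h1, if_neg h2]
        ring
  unfold qform
  rw [hmain]
  ring
end

section
/- Let s : ℝ → ℤ be a nondecreasing function all of whose jumps have height at most 1 (i.e. for every t ∈ ℝ, lim_{u→t⁺} s(u) − lim_{u→t⁻} s(u) ≤ 1). Suppose there exist a real h > 0, a positive integer Z, a real λ₀ > 0 and t₁ ∈ ℝ such that for all t > t₁: s(t − h − λ₀·e^{−t}) + Z ≤ s(t) ≤ s(t − h + λ₀·e^{−t}) + Z. Then there exist t₀ > t₁ and real numbers c_1 ≤ c_2 ≤ ⋯ ≤ c_Z such that the set of discontinuity points of s in (t₀, ∞) is infinite and discrete, and, enumerating these discontinuity points in increasing order as t_1 < t_2 < ⋯,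 for every l ∈ {1,…,Z} one has t_{l+kZ} − k·h → c_l as k → ∞. -/
open Set Filter Topology

/-- The right limit `lim_{u→t⁺} s(u)` of a nondecreasing integer-valued function. -/
noncomputable def rlim (s : ℝ → ℤ) (t : ℝ) : ℤ := sInf (s '' Set.Ioi t)
/-- The left limit `lim_{u→t⁻} s(u)` of a nondecreasing integer-valued function. -/
noncomputable def llim (s : ℝ → ℤ) (t : ℝ) : ℤ := sSup (s '' Set.Iio t)

namespace Stmt14

variable {s : ℝ → ℤ}

lemma ioi_ne (t : ℝ) : (s '' Set.Ioi t).Nonempty := ⟨s (t+1), t+1, by simp, rfl⟩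
lemma iio_ne (t : ℝ) : (s '' Set.Iio t).Nonempty := ⟨s (t-1), t-1, by simp, rfl⟩
lemma ioi_bdd (hm : Monotone s) (t : ℝ) : BddBelow (s '' Set.Ioi t) :=
  ⟨s t, by rintro y ⟨x, hx, rfl⟩; exact hm hx.le⟩
lemma iio_bdd (hm : Monotone s) (t : ℝ) : BddAbove (s '' Set.Iio t) :=
  ⟨s t, by rintro y ⟨x, hx, rfl⟩; exact hm hx.le⟩

lemma rlim_le (hm : Monotone s) {t x : ℝ} (hx : t < x) : rlim s t ≤ s x :=
  csInf_le (ioi_bdd hm t) ⟨x, hx, rfl⟩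
lemma le_rlim {t : ℝ} {c : ℤ} (hc : ∀ x, t < x → c ≤ s x) : c ≤ rlim s t :=
  le_csInf (ioi_ne t) (by rintro y ⟨x, hx, rfl⟩; exact hc x hx)
lemma self_le_rlim (hm : Monotone s) (t : ℝ) : s t ≤ rlim s t :=
  le_rlim fun x hx => hm hx.le
lemma le_llim (hm : Monotone s) {t x : ℝ} (hx : x < t) : s x ≤ llim s t :=
  le_csSup (iio_bdd hm t) ⟨x, hx, rfl⟩
lemma llim_le {t : ℝ} {c : ℤ} (hc : ∀ x, x < t → s x ≤ c) : llim s t ≤ c :=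
  csSup_le (iio_ne t) (by rintro y ⟨x, hx, rfl⟩; exact hc x hx)
lemma llim_le_self (hm : Monotone s) (t : ℝ) : llim s t ≤ s t :=
  llim_le fun x hx => hm hx.le
lemma rlim_le_llim (hm : Monotone s) {a b : ℝ} (hab : a < b) : rlim s a ≤ llim s b := by
  have h1 : a < (a+b)/2 := by linarith
  have h2 : (a+b)/2 < b := by linarith
  exact le_trans (rlim_le hm h1) (le_llim hm h2)
lemma rlim_mono (hm : Monotone s) {a b : ℝ} (hab : a ≤ b) : rlim s a ≤ rlim s b := by
  rcases eq_or_lt_of_le hab with rfl | hlt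
  · exact le_refl _
  · exact le_trans (rlim_le_llim hm hlt) (le_trans (llim_le_self hm b) (self_le_rlim hm b))

lemma rlim_attained (hm : Monotone s) (t : ℝ) :
    ∃ u, t < u ∧ ∀ x, t < x → x ≤ u → s x = rlim s t := by
  obtain ⟨u, hu, hsu⟩ := Int.csInf_mem (ioi_ne (s := s) t) (ioi_bdd hm t)
  have hsu' : s u = rlim s t := hsu
  exact ⟨u, hu, fun x hx hxu => le_antisymm (le_trans (hm hxu) (le_of_eq hsu')) (rlim_le hm hx)⟩

/-- If there is no jump in `(a, b]`, then `rlim` is constant there. -/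
lemma noJump_rlim_eq (hm : Monotone s) {a b : ℝ} (hab : a < b)
    (hnj : ∀ x, a < x → x ≤ b → ¬ llim s x < rlim s x) : rlim s b = rlim s a := by
  refine le_antisymm ?_ (rlim_mono hm hab.le)
  by_contra hlt
  push_neg at hlt
  set T : Set ℝ := {y | y ∈ Set.Icc a b ∧ rlim s y ≤ rlim s a} with hT
  have haT : a ∈ T := ⟨⟨le_refl a, hab.le⟩, le_refl _⟩
  have hbddT : BddAbove T := ⟨b, fun y hy => hy.1.2⟩
  set x := sSup T with hx
  have hax : a ≤ x := le_csSup hbddT haT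
  have hxb : x ≤ b := csSup_le ⟨a, haT⟩ fun y hy => hy.1.2
  obtain ⟨u, hu, hsu⟩ := rlim_attained hm a
  have hyT : (a + min u b)/2 ∈ T ∧ a < (a + min u b)/2 := by
    have hminab : a < min u b := lt_min hu hab
    have hy1 : a < (a + min u b)/2 := by linarith
    have hy2 : (a + min u b)/2 < min u b := by linarith
    refine ⟨⟨⟨hy1.le, lt_of_lt_of_le hy2 (min_le_right _ _) |>.le⟩, ?_⟩, hy1⟩
    calc rlim s ((a + min u b)/2) ≤ s (min u b) := rlim_le hm hy2
      _ = rlim s a := hsu _ hminab (min_le_left _ _)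
  have haxlt : a < x := lt_of_lt_of_le hyT.2 (le_csSup hbddT hyT.1)
  have h1 : ∀ w, w < x → s w ≤ rlim s a := by
    intro w hw
    rcases le_or_gt w a with hwa | haw
    · exact le_trans (hm hwa) (self_le_rlim hm a)
    · obtain ⟨y', hy'T, hwy'⟩ := exists_lt_of_lt_csSup ⟨a, haT⟩ hw
      exact le_trans (le_trans (self_le_rlim hm w) (rlim_mono hm hwy'.le)) hy'T.2
  have h2 : llim s x ≤ rlim s a := llim_le h1
  have hxT : x ∈ T := by
    refine ⟨⟨hax, hxb⟩, ?_⟩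
    have h3 := hnj x haxlt hxb
    push_neg at h3
    exact le_trans h3 h2
  obtain ⟨u', hu', hsu'⟩ := rlim_attained hm x
  rcases eq_or_lt_of_le hxb with hxeq | hxlt
  · rw [hxeq] at hxT
    exact absurd hxT.2 (not_le.mpr hlt)
  · have hminxb : x < min u' b := lt_min hu' hxlt
    have hy1 : x < (x + min u' b)/2 := by linarith
    have hy2 : (x + min u' b)/2 < min u' b := by linarith
    have hmemT : (x + min u' b)/2 ∈ T := by
      refine ⟨⟨le_trans hax hy1.le, (lt_of_lt_of_le hy2 (min_le_right _ _)).le⟩, ?_⟩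
      calc rlim s ((x + min u' b)/2) ≤ s (min u' b) := rlim_le hm hy2
        _ = rlim s x := hsu' _ hminxb (min_le_left _ _)
        _ ≤ rlim s a := hxT.2
    exact absurd (le_csSup hbddT hmemT) (not_le.mpr hy1)

/-- At an isolated next jump, `rlim` increases exactly by one. -/
lemma jump_step (hm : Monotone s) (hjump : ∀ t, rlim s t - llim s t ≤ 1) {a b : ℝ}
    (hab : a < b) (hb : llim s b < rlim s b)
    (hnj : ∀ x, a < x → x < b → ¬ llim s x < rlim s x) :
    rlim s b = rlim s a + 1 := by
  have h1 : rlim s b ≤ llim s b + 1 := by have := hjump b; omega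
  have h2 : llim s b ≤ rlim s a := by
    refine llim_le fun w hw => ?_
    rcases le_or_gt w a with hwa | haw
    · exact le_trans (hm hwa) (self_le_rlim hm a)
    · have : rlim s w = rlim s a :=
        noJump_rlim_eq hm haw (fun x hx hxw => hnj x hx (lt_of_le_of_lt hxw hw))
      exact this ▸ self_le_rlim hm w
  have h3 : rlim s a ≤ llim s b := rlim_le_llim hm hab
  omega

lemma jumps_finite (hm : Monotone s) (a b : ℝ) :
    ({t : ℝ | llim s t < rlim s t} ∩ Set.Ioo a b).Finite := by
  rcases le_or_gt b a with hba | hab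
  · rw [Set.Ioo_eq_empty (by exact fun hc => absurd hba (not_le.mpr hc))]
    simp
  · apply Set.Finite.of_finite_image (f := fun t => llim s t)
    · apply Set.Finite.subset (Set.finite_Icc (s a) (s b))
      rintro z ⟨t, ⟨htJ, hta, htb⟩, rfl⟩
      exact ⟨le_llim hm hta, le_trans (llim_le_self hm t) (hm htb.le)⟩
    · intro u hu v hv huv
      by_contra hne
      rcases lt_or_gt_of_ne hne with hlt | hlt
      · have hle := rlim_le_llim hm hlt
        have := hu.1
        simp only [Set.mem_setOf_eq] at this huv
        omega
      · have hle := rlim_le_llim hm hlt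
        have := hv.1
        simp only [Set.mem_setOf_eq] at this huv
        omega

end Stmt14

open Stmt14

theorem statement14
    (s : ℝ → ℤ) (hmono : Monotone s)
    -- all jumps of `s` have height at most `1`
    (hjump : ∀ t : ℝ, rlim s t - llim s t ≤ 1)
    (h : ℝ) (hh : 0 < h) (Z : ℕ) (hZ : 0 < Z)
    (lam₀ : ℝ) (hlam₀ : 0 < lam₀) (t₁ : ℝ)
    (hineq : ∀ t : ℝ, t₁ < t →
      s (t - h - lam₀ * Real.exp (-t)) + (Z : ℤ) ≤ s t ∧
      s t ≤ s (t - h + lam₀ * Real.exp (-t)) + (Z : ℤ)) :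
    ∃ t₀ : ℝ, t₁ < t₀ ∧ ∃ c : ℕ → ℝ,
      -- `c_1 ≤ c_2 ≤ ⋯ ≤ c_Z`
      (∀ l, 1 ≤ l → l < Z → c l ≤ c (l + 1)) ∧
      -- the set of discontinuity points of `s` in `(t₀, ∞)` is infinite and discrete
      ({t : ℝ | llim s t < rlim s t} ∩ Set.Ioi t₀).Infinite ∧
      (∀ x : ℝ, ¬ AccPt x (𝓟 ({t : ℝ | llim s t < rlim s t} ∩ Set.Ioi t₀))) ∧
      -- enumerating these points in increasing order as
      -- `tseq 0 = t_1 < tseq 1 = t_2 < ⋯`, one has `t_{l+kZ} − k·h → c_l`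
      ∀ tseq : ℕ → ℝ, StrictMono tseq →
        Set.range tseq = {t : ℝ | llim s t < rlim s t} ∩ Set.Ioi t₀ →
        ∀ l, 1 ≤ l → l ≤ Z →
          Tendsto (fun k : ℕ => tseq (l + k * Z - 1) - (k : ℝ) * h)
            atTop (𝓝 (c l)) := by
  classical
  set J := {t : ℝ | llim s t < rlim s t} with hJdef
  set ε : ℝ → ℝ := fun t => lam₀ * Real.exp (-t) with hεdef
  have hεpos : ∀ t, 0 < ε t := fun t => mul_pos hlam₀ (Real.exp_pos _)
  have hεanti : ∀ a b : ℝ, a < b → ε b < ε a := by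
    intro a b hab
    exact mul_lt_mul_of_pos_left (Real.exp_lt_exp.mpr (by linarith)) hlam₀
  set m : ℝ := min 1 h with hmdef
  have hmpos : 0 < m := lt_min one_pos hh
  set t₀ : ℝ := max t₁ (Real.log (2 * lam₀ / m)) + 1 with ht₀def
  have ht₀t₁ : t₁ < t₀ := by
    rw [ht₀def]
    have := le_max_left t₁ (Real.log (2 * lam₀ / m))
    linarith
  have hεsmall : ∀ t, t₀ < t → ε t < m / 2 := by
    intro t ht
    have hlogt : Real.log (2 * lam₀ / m) < t := by
      rw [ht₀def] at ht
      have := le_max_right t₁ (Real.log (2 * lam₀ / m))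
      linarith
    have hpos : (0:ℝ) < 2 * lam₀ / m := by positivity
    have h1 : Real.exp (-t) < Real.exp (-(Real.log (2 * lam₀ / m))) :=
      Real.exp_lt_exp.mpr (by linarith)
    have h2 : Real.exp (-(Real.log (2 * lam₀ / m))) = m / (2 * lam₀) := by
      rw [Real.exp_neg, Real.exp_log hpos]
      field_simp
    have h3 : lam₀ * Real.exp (-t) < lam₀ * (m / (2 * lam₀)) := by
      rw [← h2]; exact mul_lt_mul_of_pos_left h1 hlam₀
    calc ε t = lam₀ * Real.exp (-t) := rfl
      _ < lam₀ * (m / (2 * lam₀)) := h3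
      _ = m / 2 := by field_simp
  have hεone : ∀ t, t₀ < t → ε t < 1 := fun t ht =>
    lt_of_lt_of_le (hεsmall t ht) (by
      have := min_le_left 1 h; rw [hmdef]; linarith)
  have hεh2 : ∀ t, t₀ < t → ε t < h / 2 := fun t ht =>
    lt_of_lt_of_le (hεsmall t ht) (by
      have := min_le_right 1 h; rw [hmdef]; linarith)
  -- Claim 1
  have claim1 : ∀ t, t₁ < t → rlim s (t - h - ε t) + (Z:ℤ) ≤ rlim s t := by
    intro t ht
    refine le_rlim fun v hv => ?_
    have h1 := (hineq v (ht.trans hv)).1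
    have h2 : t - h - ε t < v - h - ε v := by
      have := hεanti t v hv
      simp only [hεdef] at this ⊢
      linarith
    have h3 : rlim s (t - h - ε t) ≤ s (v - h - ε v) := rlim_le hmono h2
    have h4 : s (v - h - ε v) + (Z:ℤ) ≤ s v := by
      simpa only [hεdef] using h1
    omega
  -- Claim 2
  have claim2 : ∀ t, t₁ < t → ε t < 1 → rlim s t ≤ rlim s (t - h + ε t) + (Z:ℤ) := by
    intro t ht hε1
    obtain ⟨u', hu', hsu'⟩ := rlim_attained hmono (t - h + ε t)
    set v : ℝ := t + (u' - (t - h + ε t)) with hvdef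
    have htv : t < v := by simp only [hvdef]; linarith
    have hεexp : ε t - ε v ≤ ε t * (v - t) := by
      have e0 := Real.add_one_le_exp (t - v)
      have e1 : Real.exp (-t) * (t - v + 1) ≤ Real.exp (-v) := by
        calc Real.exp (-t) * (t - v + 1) ≤ Real.exp (-t) * Real.exp (t - v) :=
              mul_le_mul_of_nonneg_left e0 (Real.exp_nonneg _)
          _ = Real.exp (-v) := by rw [← Real.exp_add]; ring_nf
      simp only [hεdef]
      nlinarith [Real.exp_pos (-t), Real.exp_pos (-v)]
    have key1 : t - h + ε t < v - h + ε v := by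
      have h5 : ε t * (v - t) < v - t := by
        have hvt : 0 < v - t := by linarith
        nlinarith
      linarith
    have key2 : v - h + ε v ≤ u' := by
      have := hεanti t v htv
      simp only [hvdef] at *
      linarith
    have h6 := (hineq v (ht.trans htv)).2
    have h7 : s (v - h + ε v) = rlim s (t - h + ε t) := hsu' _ key1 key2
    have h8 : rlim s t ≤ s v := rlim_le hmono htv
    have h9 : s v ≤ s (v - h + ε v) + (Z:ℤ) := by simpa only [hεdef] using h6
    omega
  -- Infinitude
  have hInf : (J ∩ Set.Ioi t₀).Infinite := by
    by_contra hfin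
    rw [Set.not_infinite] at hfin
    obtain ⟨M, hM⟩ := hfin.bddAbove
    set T : ℝ := max (max M t₀) 0 + h + lam₀ + 1 with hTdef
    have hT0 : (0:ℝ) ≤ max (max M t₀) 0 := le_max_right _ _
    have hTpos : 0 < T := by simp only [hTdef]; linarith
    have hεT : ε T ≤ lam₀ := by
      simp only [hεdef]
      nlinarith [Real.exp_le_one_iff.mpr (by linarith : -T ≤ 0), Real.exp_pos (-T)]
    have hTt₁ : t₁ < T := by
      have h1 : t₀ ≤ max (max M t₀) 0 := le_trans (le_max_right M t₀) (le_max_left _ _)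
      simp only [hTdef]
      linarith
    have hgap : max (max M t₀) 0 + 1 ≤ T - h - ε T := by
      simp only [hTdef]; linarith
    have hMlt : M < T - h - ε T := by
      have : M ≤ max (max M t₀) 0 := le_trans (le_max_left M t₀) (le_max_left _ _)
      linarith
    have ht₀lt : t₀ < T - h - ε T := by
      have : t₀ ≤ max (max M t₀) 0 := le_trans (le_max_right M t₀) (le_max_left _ _)
      linarith
    have hconst : rlim s T = rlim s (T - h - ε T) := by
      refine noJump_rlim_eq hmono ?_ ?_
      · have := hεpos T; linarith
      · intro x hx1 hx2 hxJ
        have hxmem : x ∈ J ∩ Set.Ioi t₀ := ⟨hxJ, by simp; linarith⟩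
        have := hM hxmem
        linarith
    have := claim1 T hTt₁
    omega
  -- Discreteness
  have hDisc : ∀ x : ℝ, ¬ AccPt x (𝓟 (J ∩ Set.Ioi t₀)) := by
    intro x hacc
    rw [accPt_iff_nhds] at hacc
    have hfin : ((J ∩ Set.Ioi t₀) ∩ Set.Ioo (x-1) (x+1)).Finite :=
      (jumps_finite hmono (x-1) (x+1)).subset (by
        rintro y ⟨⟨hy1, _⟩, hy2⟩; exact ⟨hy1, hy2⟩)
    set F := (J ∩ Set.Ioi t₀) ∩ Set.Ioo (x-1) (x+1) with hFdef
    have hcl : IsClosed (F \ {x} : Set ℝ) := hfin.diff.isClosed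
    have hU : (Set.Ioo (x-1) (x+1) ∩ (F \ {x})ᶜ) ∈ 𝓝 x := by
      refine Filter.inter_mem (Ioo_mem_nhds (by linarith) (by linarith)) ?_
      exact hcl.isOpen_compl.mem_nhds (by simp)
    obtain ⟨y, ⟨⟨hyIoo, hyc⟩, hyJ⟩, hyx⟩ := hacc _ hU
    exact hyc ⟨⟨hyJ, hyIoo⟩, hyx⟩
  -- counting along an enumeration
  have hcount : ∀ tseq : ℕ → ℝ, StrictMono tseq →
      Set.range tseq = J ∩ Set.Ioi t₀ →
      ∀ n : ℕ, rlim s (tseq n) = rlim s t₀ + (n:ℤ) + 1 := by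
    intro tseq hsm hrange n
    have hmem : ∀ k : ℕ, tseq k ∈ J ∩ Set.Ioi t₀ := fun k =>
      hrange ▸ Set.mem_range_self k
    induction n with
    | zero =>
      have h0 := hmem 0
      have := jump_step hmono hjump h0.2 h0.1 (fun x hx1 hx2 hxJ => by
        have hxmem : x ∈ Set.range tseq := by rw [hrange]; exact ⟨hxJ, hx1⟩
        obtain ⟨k, rfl⟩ := hxmem
        exact absurd (hsm.lt_iff_lt.mp hx2) (Nat.not_lt_zero k))
      push_cast
      omega
    | succ n ih =>
      have hn1 := hmem (n+1)
      have hlt : tseq n < tseq (n+1) := hsm (Nat.lt_succ_self n)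
      have := jump_step hmono hjump hlt hn1.1 (fun x hx1 hx2 hxJ => by
        have hxmem : x ∈ Set.range tseq := by
          rw [hrange]
          exact ⟨hxJ, lt_trans (hmem n).2 hx1⟩
        obtain ⟨k, rfl⟩ := hxmem
        have h1 := hsm.lt_iff_lt.mp hx1
        have h2 := hsm.lt_iff_lt.mp hx2
        omega)
      push_cast at ih ⊢
      omega
  -- values below the n-th jump
  have hbelow : ∀ tseq : ℕ → ℝ, StrictMono tseq →
      Set.range tseq = J ∩ Set.Ioi t₀ →
      ∀ (n : ℕ) (y : ℝ), y < tseq n → rlim s y ≤ rlim s t₀ + (n:ℤ) := by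
    intro tseq hsm hrange n y hy
    have hmem : tseq n ∈ J ∩ Set.Ioi t₀ := hrange ▸ Set.mem_range_self n
    have h1 : rlim s y ≤ llim s (tseq n) := rlim_le_llim hmono hy
    have h2 := hjump (tseq n)
    have h3 := hmem.1
    have h4 := hcount tseq hsm hrange n
    simp only [hJdef, Set.mem_setOf_eq] at h3
    omega
  -- key quantitative bound
  have hkey : ∀ tseq : ℕ → ℝ, StrictMono tseq →
      Set.range tseq = J ∩ Set.Ioi t₀ →
      ∀ n : ℕ, tseq n + h - ε (tseq n) < tseq (n + Z) ∧
        tseq (n + Z) ≤ tseq n + h + ε (tseq n) := by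
    intro tseq hsm hrange n
    have hmem : ∀ k : ℕ, tseq k ∈ J ∩ Set.Ioi t₀ := fun k =>
      hrange ▸ Set.mem_range_self k
    have hu₀ : t₀ < tseq n := (hmem n).2
    have hεu1 : ε (tseq n) < 1 := hεone _ hu₀
    have hεuh : ε (tseq n) < h / 2 := hεh2 _ hu₀
    have hεupos := hεpos (tseq n)
    constructor
    · -- lower bound
      set t : ℝ := tseq n + h - ε (tseq n) with htdef
      have htt₀ : t₀ < t := by simp only [htdef]; linarith
      have htt₁ : t₁ < t := lt_trans ht₀t₁ htt₀
      have hc2 := claim2 t htt₁ (hεone t htt₀)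
      have hεt : ε t < ε (tseq n) := hεanti _ _ (by simp only [htdef]; linarith)
      have hylt : t - h + ε t < tseq n := by simp only [htdef]; linarith
      have h5 := hbelow tseq hsm hrange n _ hylt
      have h6 := hcount tseq hsm hrange (n + Z)
      by_contra hcon
      push_neg at hcon
      have h7 : rlim s (tseq (n + Z)) ≤ rlim s t := rlim_mono hmono hcon
      push_cast at h6
      omega
    · -- upper bound
      set b : ℝ := tseq n + h + ε (tseq n) with hbdef
      have hbt₁ : t₁ < b := by
        have : t₀ < b := by simp only [hbdef]; linarith
        linarith
      have hc1 := claim1 b hbt₁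
      have hεb : ε b < ε (tseq n) := hεanti _ _ (by simp only [hbdef]; linarith)
      have h8 : tseq n ≤ b - h - ε b := by simp only [hbdef]; linarith
      have h9 : rlim s (tseq n) ≤ rlim s (b - h - ε b) := rlim_mono hmono h8
      have h10 := hcount tseq hsm hrange n
      have h11 := hcount tseq hsm hrange (n + Z)
      by_contra hcon
      push_neg at hcon
      have h12 := hbelow tseq hsm hrange (n + Z) b hcon
      push_cast at h10 h11 h12
      omega
  refine ⟨t₀, ht₀t₁, ?_⟩
  by_cases hex : ∃ tseq : ℕ → ℝ, StrictMono tseq ∧ Set.range tseq = J ∩ Set.Ioi t₀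
  · obtain ⟨T0, hT0sm, hT0r⟩ := hex
    have hmem : ∀ k : ℕ, T0 k ∈ J ∩ Set.Ioi t₀ := fun k => hT0r ▸ Set.mem_range_self k
    set f : ℕ → ℕ → ℝ := fun l k => T0 (l + k * Z - 1) - (k:ℝ) * h with hfdef
    have hstep : ∀ l : ℕ, 1 ≤ l → ∀ k : ℕ,
        |T0 (l + (k+1) * Z - 1) - T0 (l + k * Z - 1) - h| ≤ ε (T0 (l + k * Z - 1)) := by
      intro l hl k
      have hidx : l + (k+1) * Z - 1 = (l + k * Z - 1) + Z := by rw [add_mul, one_mul]; omega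
      rw [hidx]
      have := hkey T0 hT0sm hT0r (l + k * Z - 1)
      rw [abs_le]
      constructor <;> linarith [this.1, this.2]
    have hgrow : ∀ l : ℕ, 1 ≤ l → ∀ k : ℕ,
        T0 (l - 1) + (k:ℝ) * (h/2) ≤ T0 (l + k * Z - 1) := by
      intro l hl k
      induction k with
      | zero => simp
      | succ k ih =>
        have hidx : l + (k+1) * Z - 1 = (l + k * Z - 1) + Z := by rw [add_mul, one_mul]; omega
        have hk := (hkey T0 hT0sm hT0r (l + k * Z - 1)).1
        have hε := hεh2 _ (hmem (l + k * Z - 1)).2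
        rw [hidx]
        push_cast
        push_cast at ih
        linarith
    have hcauchy : ∀ l : ℕ, 1 ≤ l → CauchySeq (f l) := by
      intro l hl
      refine cauchySeq_of_le_geometric (Real.exp (-(h/2)))
        (lam₀ * Real.exp (-(T0 (l - 1)))) (Real.exp_lt_one_iff.mpr (by linarith)) ?_
      intro k
      rw [Real.dist_eq]
      have h1 : f l k - f l (k+1)
          = -(T0 (l + (k+1) * Z - 1) - T0 (l + k * Z - 1) - h) := by
        simp only [hfdef]; push_cast; ring
      rw [h1, abs_neg]
      have h2 := hstep l hl k
      have h3 := hgrow l hl k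
      have h4 : ε (T0 (l + k * Z - 1)) ≤ lam₀ * Real.exp (-(T0 (l-1) + (k:ℝ) * (h/2))) := by
        simp only [hεdef]
        exact mul_le_mul_of_nonneg_left
          (Real.exp_le_exp.mpr (by linarith)) hlam₀.le
      have h5 : Real.exp (-(T0 (l-1) + (k:ℝ) * (h/2)))
          = Real.exp (-(T0 (l-1))) * Real.exp (-(h/2)) ^ k := by
        rw [← Real.exp_nat_mul, ← Real.exp_add]
        ring_nf
      calc |T0 (l + (k+1) * Z - 1) - T0 (l + k * Z - 1) - h|
          ≤ ε (T0 (l + k * Z - 1)) := h2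
        _ ≤ lam₀ * Real.exp (-(T0 (l-1) + (k:ℝ) * (h/2))) := h4
        _ = lam₀ * Real.exp (-(T0 (l-1))) * Real.exp (-(h/2)) ^ k := by
            rw [h5]; ring
    set c : ℕ → ℝ := fun l => limUnder atTop (f l) with hcdef
    have hc : ∀ l : ℕ, 1 ≤ l → Tendsto (f l) atTop (𝓝 (c l)) := by
      intro l hl
      obtain ⟨cl, hcl⟩ := cauchySeq_tendsto_of_complete (hcauchy l hl)
      simpa only [hcdef, hcl.limUnder_eq] using hcl
    refine ⟨c, ?_, hInf, hDisc, ?_⟩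
    · intro l hl hlZ
      refine le_of_tendsto_of_tendsto' (hc l hl) (hc (l+1) (by omega)) fun k => ?_
      have hle : l + k * Z - 1 ≤ l + 1 + k * Z - 1 := by omega
      have := hT0sm.monotone hle
      simp only [hfdef]
      linarith
    · intro tseq hsm hrange l hl hlZ
      have heq : tseq = T0 :=
        (hT0sm.range_inj hT0sm).mp rfl ▸ (hsm.range_inj hT0sm).mp (hrange.trans hT0r.symm)
      rw [heq]
      exact hc l hl
  · refine ⟨fun _ => 0, fun _ _ _ => le_refl _, hInf, hDisc, ?_⟩
    intro tseq h1 h2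
    exact absurd ⟨tseq, h1, h2⟩ hex
end
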